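/- arXiv:1202.1989 — 7 statements merged into one kernel-verified Lean document; each statement's English description precedes it below -/
import Mathlib

section
/- Let (ε : G1 → G2, γ : G2 → G3, ε' : F1 → F2, γ' : F2 → F3, δ : F3 → G1) be a cyclic six-term exact sequence of abelian groups with F1, F2, F3 free abelian, let A : ℤ^{X1'} → ℤ^{X1} and B : ℤ^{X3'} → ℤ^{X3} be homomorphisms (X's countable index sets), and suppose given isomorphisms α1 : coker A → G1, β1 : ker A → F1, α3 : coker B → G3, β3 : ker B → F3. Suppose additionally that a homomorphism Z : ℤ^{X3'} → ℤ^{X1} is given and that either there exists A' : ℤ^{X1} → ℤ^{X1'} with all matrix entries of A∘A' − id nonnegative, or there exists B' : ℤ^{X3} → ℤ^{X3'} with all matrix entries of B'∘B − id nonnegative. Then a homomorphism Y : ℤ^{X3'} → ℤ^{X1} and isomorphisms α2 : coker C → G2, β2 : ker C → F2 (where C = (A Y; 0 B)) satisfying the five commutativity conditions (a) α2 ∘ Ī = ε ∘ α1, (b) α3 ∘ P̄ = γ ∘ α2, (c) β2 ∘ I' = ε' ∘ β1, (d) γ' ∘ β2 = β3 ∘ P', (e) α1 ∘ [Y] = δ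 ∘ β3, may be chosen with the additional property that all matrix entries of Y − Z are nonnegative. -/
noncomputable section Snake

variable {X1 X1' X3 X3' : Type}

/-- The block matrix `(A Y; 0 B)` as a homomorphism
`ℤ^{X1'} ⊕ ℤ^{X3'} → ℤ^{X1} ⊕ ℤ^{X3}`, `(ξ, η) ↦ (Aξ + Yη, Bη)`. -/
def blockC (A : (X1' →₀ ℤ) →+ (X1 →₀ ℤ)) (B : (X3' →₀ ℤ) →+ (X3 →₀ ℤ))
    (Y : (X3' →₀ ℤ) →+ (X1 →₀ ℤ)) :
    ((X1' →₀ ℤ) × (X3' →₀ ℤ)) →+ ((X1 →₀ ℤ) × (X3 →₀ ℤ)) :=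
  (A.comp (AddMonoidHom.fst _ _) + Y.comp (AddMonoidHom.snd _ _)).prod
    (B.comp (AddMonoidHom.snd _ _))

@[simp] lemma blockC_apply (A : (X1' →₀ ℤ) →+ (X1 →₀ ℤ)) (B : (X3' →₀ ℤ) →+ (X3 →₀ ℤ))
    (Y : (X3' →₀ ℤ) →+ (X1 →₀ ℤ)) (ξ : X1' →₀ ℤ) (η : X3' →₀ ℤ) :
    blockC A B Y (ξ, η) = (A ξ + Y η, B η) := rfl

variable (A : (X1' →₀ ℤ) →+ (X1 →₀ ℤ)) (B : (X3' →₀ ℤ) →+ (X3 →₀ ℤ))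
    (Y : (X3' →₀ ℤ) →+ (X1 →₀ ℤ))

/-- Snake map `I' : ker A → ker C`, `ξ ↦ (ξ, 0)`. -/
def snakeI' : A.ker →+ (blockC A B Y).ker :=
  AddMonoidHom.mk' (fun ξ => ⟨((ξ : X1' →₀ ℤ), 0), by
      have h : A (ξ : X1' →₀ ℤ) = 0 := ξ.2
      simp [AddMonoidHom.mem_ker, h]⟩)
    (fun a b => Subtype.ext (by simp [Prod.ext_iff]))

/-- Snake map `P' : ker C → ker B`, `(ξ, η) ↦ η`. -/
def snakeP' : (blockC A B Y).ker →+ B.ker :=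
  AddMonoidHom.mk' (fun p => ⟨(p : (X1' →₀ ℤ) × (X3' →₀ ℤ)).2, by
      have h : blockC A B Y (p : (X1' →₀ ℤ) × (X3' →₀ ℤ)) = 0 := p.2
      rw [AddMonoidHom.mem_ker]
      have := congrArg Prod.snd h
      exact this⟩)
    (fun a b => Subtype.ext (by simp))

/-- Snake connecting map `[Y] : ker B → coker A`, `η ↦ [Y η]`. -/
def snakeDelta : B.ker →+ (X1 →₀ ℤ) ⧸ A.range :=
  (QuotientAddGroup.mk' A.range).comp (Y.comp B.ker.subtype)

/-- Snake map `Ī : coker A → coker C`, `[x] ↦ [(x, 0)]`. -/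
def snakeIbar :
    ((X1 →₀ ℤ) ⧸ A.range) →+ (((X1 →₀ ℤ) × (X3 →₀ ℤ)) ⧸ (blockC A B Y).range) :=
  QuotientAddGroup.map _ _ (AddMonoidHom.inl _ _) (by
    intro x hx
    obtain ⟨ξ, rfl⟩ := hx
    exact ⟨(ξ, 0), by simp [Prod.ext_iff]⟩)

/-- Snake map `P̄ : coker C → coker B`, `[(x, y)] ↦ [y]`. -/
def snakePbar :
    (((X1 →₀ ℤ) × (X3 →₀ ℤ)) ⧸ (blockC A B Y).range) →+ ((X3 →₀ ℤ) ⧸ B.range) :=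
  QuotientAddGroup.map _ _ (AddMonoidHom.snd _ _) (by
    intro p hp
    obtain ⟨q, rfl⟩ := hp
    exact ⟨q.2, rfl⟩)

end Snake

section Helpers

open Finsupp Submodule Set in
theorem nat_submodule_free (N : Submodule ℤ (ℕ →₀ ℤ)) :
    ∃ (ι : Type) (_ : N ≃ₗ[ℤ] (ι →₀ ℤ)), True := by
  classical
  set Nn : ℕ → Submodule ℤ (ℕ →₀ ℤ) :=
    fun n => N ⊓ Finsupp.supported ℤ ℤ (Set.Iio n) with hNn
  set I : ℕ → Ideal ℤ := fun n => (Nn (n+1)).map (Finsupp.lapply n) with hI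
  haveI hIp : ∀ n, (I n).IsPrincipal := fun n => IsPrincipalIdealRing.principal _
  set g : ℕ → ℤ := fun n => Submodule.IsPrincipal.generator (I n) with hg
  have hgen : ∀ n, ∃ y, y ∈ Nn (n+1) ∧ y n = g n := by
    intro n
    have h := Submodule.IsPrincipal.generator_mem (I n)
    obtain ⟨y, hy, hyn⟩ := Submodule.mem_map.mp h
    exact ⟨y, hy, by simpa using hyn⟩
  choose w hw1 hw2 using hgen
  have hwN : ∀ n, w n ∈ N := fun n => (hw1 n).1
  have hwsupp : ∀ n m, n < m → w n m = 0 := by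
    intro n m hm
    have h := (Finsupp.mem_supported' ℤ (w n)).mp (hw1 n).2
    exact h m (by simpa using hm)
  set S : Set ℕ := {k | g k ≠ 0} with hS
  -- spanning
  have key : ∀ n, ∀ v ∈ Nn n, v ∈ span ℤ (w '' S) := by
    intro n
    induction n with
    | zero =>
      intro v hv
      have h0 : v ∈ Finsupp.supported ℤ ℤ (Set.Iio 0) := hv.2
      have : (Set.Iio 0 : Set ℕ) = ∅ := by
        ext m; simp
      rw [this, Finsupp.supported_empty, Submodule.mem_bot] at h0
      rw [h0]; exact zero_mem _
    | succ n IH =>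
      intro v hv
      have hvI : v n ∈ I n := by
        rw [hI]
        exact ⟨v, hv, by simp⟩
      have hvI' : v n ∈ Ideal.span {g n} := by
        rw [hg, Ideal.span_singleton_generator]; exact hvI
      obtain ⟨a, ha⟩ := Ideal.mem_span_singleton'.mp hvI'
      by_cases hgn : g n = 0
      · have hvn : v n = 0 := by rw [← ha, hg] at *; rw [hgn] at ha ⊢; simpa [hgn] using ha.symm
        have hvNn : v ∈ Nn n := by
          refine ⟨hv.1, (Finsupp.mem_supported' ℤ v).mpr ?_⟩
          intro m hm
          rcases Nat.lt_or_ge m (n+1) with h | h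
          · have : m = n := by
              simp only [Set.mem_Iio, not_lt] at hm
              omega
            rw [this]; exact hvn
          · exact (Finsupp.mem_supported' ℤ v).mp hv.2 m (by simp; omega)
        exact IH v hvNn
      · set v' := v - a • w n with hv'
        have hv'Nn : v' ∈ Nn n := by
          constructor
          · exact sub_mem hv.1 (Submodule.smul_mem _ _ (hwN n))
          · refine (Finsupp.mem_supported' ℤ v').mpr ?_
            intro m hm
            simp only [Set.mem_Iio, not_lt] at hm
            rcases Nat.lt_or_ge m (n+1) with h | h
            · have hmn : m = n := by omega
              subst hmn
              simp [hv', Finsupp.sub_apply, Finsupp.smul_apply, hw2, ← ha, smul_eq_mul]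
            · have h1 : v m = 0 := (Finsupp.mem_supported' ℤ v).mp hv.2 m (by simp; omega)
              have h2 : w n m = 0 := hwsupp n m (by omega)
              simp [hv', Finsupp.sub_apply, Finsupp.smul_apply, h1, h2]
        have hwmem : w n ∈ span ℤ (w '' S) :=
          Submodule.subset_span ⟨n, hgn, rfl⟩
        have : v = v' + a • w n := by rw [hv']; abel
        rw [this]
        exact add_mem (IH v' hv'Nn) (Submodule.smul_mem _ _ hwmem)
  have hspan : span ℤ (w '' S) = N := by
    apply le_antisymm
    · rw [Submodule.span_le]
      rintro x ⟨k, _, rfl⟩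
      exact hwN k
    · intro v hv
      apply key ((v.support.sup id) + 1)
      refine ⟨hv, (Finsupp.mem_supported ℤ v).mpr ?_⟩
      intro x hx
      simpa using Nat.lt_succ_of_le (Finset.le_sup (f := id) hx)
  -- linear independence
  set vS : S → (ℕ →₀ ℤ) := fun i => w i with hvS
  have claim : ∀ n (t : Finset S) (f : S → ℤ), (∀ i ∈ t, (i : ℕ) < n) →
      (∑ i ∈ t, f i • w (i : ℕ)) = 0 → ∀ i ∈ t, f i = 0 := by
    intro n
    induction n with
    | zero => intro t f ht _ i hi; exact absurd (ht i hi) (by omega)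
    | succ n IH =>
      intro t f ht hsum
      have hzero_top : ∀ j ∈ t, (j : ℕ) = n → f j = 0 := by
        intro j hj hjn
        have happ := congrArg (fun u : ℕ →₀ ℤ => u n) hsum
        simp only [Finset.sum_apply', Finsupp.smul_apply, Finsupp.coe_zero,
          Pi.zero_apply, smul_eq_mul] at happ
        have hone : ∑ i ∈ t, f i * (w (i : ℕ)) n = f j * (w (j : ℕ)) n := by
          apply Finset.sum_eq_single_of_mem j hj
          intro b hb hbj
          rcases Nat.lt_or_ge (b : ℕ) n with h | h
          · rw [hwsupp (b : ℕ) n h, mul_zero]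
          · have hbn : (b : ℕ) = n := by have := ht b hb; omega
            exact absurd (Subtype.ext (hbn.trans hjn.symm)) hbj
        rw [hone] at happ
        have hgj : (w (j : ℕ)) n = g (j : ℕ) := by rw [← hjn]; exact hw2 _
        rw [hgj] at happ
        have : g (j : ℕ) ≠ 0 := j.2
        exact (mul_eq_zero.mp happ).resolve_right this
      have hsplit := Finset.sum_filter_add_sum_filter_not t (fun i : S => (i : ℕ) = n)
        (fun i => f i • w (i : ℕ))
      have h1 : (∑ i ∈ t.filter (fun i : S => (i : ℕ) = n), f i • w (i : ℕ)) = 0 := by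
        apply Finset.sum_eq_zero
        intro i hi
        rw [Finset.mem_filter] at hi
        rw [hzero_top i hi.1 hi.2, zero_smul]
      have h2 : (∑ i ∈ t.filter (fun i : S => ¬(i : ℕ) = n), f i • w (i : ℕ)) = 0 := by
        rw [hsum] at hsplit
        rw [h1] at hsplit
        simpa using hsplit
      have IH' := IH (t.filter (fun i : S => ¬(i : ℕ) = n)) f (by
        intro i hi
        rw [Finset.mem_filter] at hi
        have := ht i hi.1
        have := hi.2
        omega) h2
      intro i hi
      by_cases h : (i : ℕ) = n
      · exact hzero_top i hi h
      · exact IH' i (Finset.mem_filter.mpr ⟨hi, h⟩)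
  have hli : LinearIndependent ℤ vS := by
    rw [linearIndependent_iff']
    intro t f hsum i hi
    exact claim ((t.sup (fun i => (i : ℕ))) + 1) t f
      (fun j hj => Nat.lt_succ_of_le (Finset.le_sup (f := fun i : S => (i : ℕ)) hj)) hsum i hi
  have hrange : Set.range vS = w '' S := by
    ext x
    simp [hvS, Set.mem_image, Set.mem_range, Subtype.exists, eq_comm]
  refine ⟨S, ?_, trivial⟩
  exact (LinearEquiv.ofEq N (span ℤ (Set.range vS))
    (by rw [hrange, hspan])).trans hli.linearCombinationEquiv.symm


theorem countable_subgroup_free {X : Type} [Countable X] (H : AddSubgroup (X →₀ ℤ)) :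
    ∃ (ι : Type) (_ : H ≃+ (ι →₀ ℤ)), True := by
  obtain ⟨f, hf⟩ := exists_injective_nat X
  set L := Finsupp.lmapDomain ℤ ℤ f with hL
  have hLinj : Function.Injective L := Finsupp.mapDomain_injective hf
  set N0 := AddSubgroup.toIntSubmodule H with hN0
  obtain ⟨ι, e, -⟩ := nat_submodule_free (N0.map L)
  refine ⟨ι, ?_, trivial⟩
  have e0 : H ≃+ N0 :=
    { toFun := fun x => ⟨x.1, show _ ∈ AddSubgroup.toIntSubmodule H from x.2⟩
      invFun := fun x => ⟨x.1, show _ ∈ H from x.2⟩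
      left_inv := fun x => rfl
      right_inv := fun x => rfl
      map_add' := fun a b => rfl }
  exact (e0.trans (Submodule.equivMapOfInjective L hLinj N0).toAddEquiv).trans e.toAddEquiv

theorem lift_finsupp {ι M W : Type} [AddCommGroup M] [AddCommGroup W]
    (f : M →+ W) (g : (ι →₀ ℤ) →+ W)
    (hfg : ∀ i : ι, ∃ m : M, f m = g (Finsupp.single i 1)) :
    ∃ h : (ι →₀ ℤ) →+ M, ∀ v, f (h v) = g v := by
  choose pre hpre using hfg
  refine ⟨Finsupp.liftAddHom (fun i => (zmultiplesHom M) (pre i)), ?_⟩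
  have key : f.comp (Finsupp.liftAddHom (fun i => (zmultiplesHom M) (pre i))) = g := by
    apply Finsupp.addHom_ext
    intro a b
    simp only [AddMonoidHom.comp_apply, Finsupp.liftAddHom_apply_single]
    show f (b • pre a) = g (Finsupp.single a b)
    rw [map_zsmul, hpre, ← map_zsmul g]
    congr 1
    rw [Finsupp.smul_single]
    norm_num
  intro v
  exact DFunLike.congr_fun key v

theorem lift_of_equiv {P M W ι : Type} [AddCommGroup P] [AddCommGroup M] [AddCommGroup W]
    (e : P ≃+ (ι →₀ ℤ)) (f : M →+ W) (g : P →+ W)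
    (hfg : ∀ p : P, ∃ m, f m = g p) :
    ∃ h : P →+ M, ∀ p, f (h p) = g p := by
  obtain ⟨h0, hh0⟩ := lift_finsupp f (g.comp e.symm.toAddMonoidHom) (fun i => hfg _)
  refine ⟨h0.comp e.toAddMonoidHom, fun p => ?_⟩
  have := hh0 (e p)
  simpa using this

theorem hom_apply_eq_sum {X X' : Type} (g : (X →₀ ℤ) →+ (X' →₀ ℤ)) (v : X →₀ ℤ) :
    g v = ∑ y ∈ v.support, v y • g (Finsupp.single y 1) := by
  conv_lhs => rw [← Finsupp.sum_single v]
  rw [Finsupp.sum, map_sum]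
  apply Finset.sum_congr rfl
  intro y _
  rw [← map_zsmul g]
  congr 1
  rw [Finsupp.smul_single]
  norm_num

theorem hom_apply_nonneg {X X' : Type} (g : (X →₀ ℤ) →+ (X' →₀ ℤ))
    (hg : ∀ x y, 0 ≤ (g (Finsupp.single y 1)) x) (v : X →₀ ℤ) (hv : ∀ y, 0 ≤ v y) (x : X') :
    0 ≤ (g v) x := by
  rw [hom_apply_eq_sum g v, Finset.sum_apply']
  apply Finset.sum_nonneg
  intro y _
  rw [Finsupp.smul_apply, smul_eq_mul]
  exact mul_nonneg (hv y) (hg x y)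

end Helpers


section Master

variable {X1 X1' X3 X3' : Type}

set_option maxHeartbeats 2000000 in
set_option synthInstance.maxHeartbeats 200000 in
theorem master {G1 G2 G3 F1 F2 F3 : Type}
    [AddCommGroup G1] [AddCommGroup G2] [AddCommGroup G3]
    [AddCommGroup F1] [AddCommGroup F2] [AddCommGroup F3]
    (ε : G1 →+ G2) (γ : G2 →+ G3) (ε' : F1 →+ F2) (γ' : F2 →+ F3) (δ : F3 →+ G1)
    (hε' : Function.Injective ε')
    (h1 : ε.range = γ.ker) (h2 : ε'.range = γ'.ker)
    (h3 : γ'.range = δ.ker) (h4 : δ.range = ε.ker)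
    (A : (X1' →₀ ℤ) →+ (X1 →₀ ℤ)) (B : (X3' →₀ ℤ) →+ (X3 →₀ ℤ))
    (α1 : ((X1 →₀ ℤ) ⧸ A.range) ≃+ G1) (β1 : A.ker ≃+ F1)
    (α3 : ((X3 →₀ ℤ) ⧸ B.range) ≃+ G3) (β3 : B.ker ≃+ F3)
    (Y : (X3' →₀ ℤ) →+ (X1 →₀ ℤ)) (q3 : (X3 →₀ ℤ) →+ G2)
    (hq3 : ∀ y, γ (q3 y) = α3 (QuotientAddGroup.mk' B.range y))
    (hi : ∀ η, ε (α1 (QuotientAddGroup.mk' A.range (Y η))) = - q3 (B η))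
    (hii : ∀ η : B.ker, α1 (QuotientAddGroup.mk' A.range (Y ↑η)) = δ (β3 η))
    (ιK : Type) (eK : γ'.range ≃+ (ιK →₀ ℤ)) :
    ∃ (α2 : (((X1 →₀ ℤ) × (X3 →₀ ℤ)) ⧸ (blockC A B Y).range) ≃+ G2)
      (β2 : (blockC A B Y).ker ≃+ F2),
      (∀ x : (X1 →₀ ℤ) ⧸ A.range, α2 (snakeIbar A B Y x) = ε (α1 x)) ∧
      (∀ c : ((X1 →₀ ℤ) × (X3 →₀ ℤ)) ⧸ (blockC A B Y).range,
        α3 (snakePbar A B Y c) = γ (α2 c)) ∧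
      (∀ ξ : A.ker, β2 (snakeI' A B Y ξ) = ε' (β1 ξ)) ∧
      (∀ p : (blockC A B Y).ker, γ' (β2 p) = β3 (snakeP' A B Y p)) ∧
      (∀ η : B.ker, α1 (snakeDelta A B Y η) = δ (β3 η)) := by
  classical
  set mkA := QuotientAddGroup.mk' A.range with hmkA
  set mkB := QuotientAddGroup.mk' B.range with hmkB
  have hγε : ∀ u : G1, γ (ε u) = 0 := by
    intro u
    have h : ε u ∈ γ.ker := h1 ▸ AddMonoidHom.mem_range.mpr ⟨u, rfl⟩
    exact AddMonoidHom.mem_ker.mp h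
  have hεδ : ∀ f : F3, ε (δ f) = 0 := by
    intro f
    have h : δ f ∈ ε.ker := h4 ▸ AddMonoidHom.mem_range.mpr ⟨f, rfl⟩
    exact AddMonoidHom.mem_ker.mp h
  have hγ'ε' : ∀ f : F1, γ' (ε' f) = 0 := by
    intro f
    have h : ε' f ∈ γ'.ker := h2 ▸ AddMonoidHom.mem_range.mpr ⟨f, rfl⟩
    exact AddMonoidHom.mem_ker.mp h
  -- the surjection q onto G2
  set q : ((X1 →₀ ℤ) × (X3 →₀ ℤ)) →+ G2 :=
    (ε.comp (α1.toAddMonoidHom.comp mkA)).comp (AddMonoidHom.fst _ _) +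
      q3.comp (AddMonoidHom.snd _ _) with hq
  have hq_apply : ∀ z : (X1 →₀ ℤ) × (X3 →₀ ℤ), q z = ε (α1 (mkA z.1)) + q3 z.2 :=
    fun z => rfl
  have hqsurj : Function.Surjective q := by
    intro gg
    obtain ⟨yq, hyq⟩ := α3.surjective (γ gg)
    obtain ⟨y, rfl⟩ := QuotientAddGroup.mk'_surjective B.range yq
    have hker : γ (gg - q3 y) = 0 := by rw [map_sub, hq3, sub_eq_zero, hyq]
    have hrange : gg - q3 y ∈ ε.range := by rw [h1]; exact AddMonoidHom.mem_ker.mpr hker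
    obtain ⟨g1, hg1⟩ := hrange
    obtain ⟨xq, hxq⟩ := α1.surjective g1
    obtain ⟨x, rfl⟩ := QuotientAddGroup.mk'_surjective A.range xq
    refine ⟨(x, y), ?_⟩
    rw [hq_apply]
    simp only [hxq, hg1]
    rw [hmkA, hxq, hg1]
    abel
  have hkerq : q.ker = (blockC A B Y).range := by
    ext z
    obtain ⟨u, y⟩ := z
    simp only [AddMonoidHom.mem_ker, AddMonoidHom.mem_range]
    constructor
    · intro hz
      have hz' : ε (α1 (mkA u)) + q3 y = 0 := hz
      have hy0 : α3 (mkB y) = 0 := by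
        have h := congrArg γ hz'
        rw [map_add, map_zero, hγε, zero_add, hq3] at h
        exact h
      have hyB : y ∈ B.range := by
        have h0 : mkB y = 0 := by
          apply α3.injective; rw [hy0, map_zero]
        rwa [hmkB, QuotientAddGroup.mk'_apply, QuotientAddGroup.eq_zero_iff] at h0
      obtain ⟨η, hη⟩ := hyB
      have h5 : ε (α1 (mkA (u - Y η))) = 0 := by
        have h6 := hi η
        rw [hη] at h6
        rw [map_sub, map_sub, map_sub, h6, sub_neg_eq_add, hz']
      have h7 : α1 (mkA (u - Y η)) ∈ δ.range := by
        rw [h4]; exact AddMonoidHom.mem_ker.mpr h5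
      obtain ⟨f3, hf3⟩ := h7
      obtain ⟨η', hη'⟩ := β3.surjective f3
      have h8 : mkA (u - Y η) = mkA (Y ↑η') :=
        α1.injective (by rw [hii η', hη', hf3])
      have h9 : u - Y η - Y ↑η' ∈ A.range := by
        have h10 : mkA (u - Y η - Y ↑η') = 0 := by
          rw [map_sub, h8, sub_self]
        rwa [hmkA, QuotientAddGroup.mk'_apply, QuotientAddGroup.eq_zero_iff] at h10
      obtain ⟨ξ, hξ⟩ := h9
      refine ⟨(ξ, η + ↑η'), ?_⟩
      rw [blockC_apply]
      have hη'B : B ↑η' = 0 := η'.2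
      refine Prod.ext ?_ ?_
      · show A ξ + Y (η + ↑η') = u
        rw [map_add, hξ]
        abel
      · show B (η + ↑η') = y
        rw [map_add, hη'B, add_zero, hη]
    · rintro ⟨⟨ξ, η⟩, hCz⟩
      rw [← hCz]
      show ε (α1 (mkA (A ξ + Y η))) + q3 (B η) = 0
      have hAξ : mkA (A ξ) = 0 := by
        rw [hmkA, QuotientAddGroup.mk'_apply, QuotientAddGroup.eq_zero_iff]
        exact ⟨ξ, rfl⟩
      rw [map_add, hAξ, zero_add, hi, neg_add_cancel]
  -- α2
  set α2 : (((X1 →₀ ℤ) × (X3 →₀ ℤ)) ⧸ (blockC A B Y).range) ≃+ G2 :=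
    (QuotientAddGroup.quotientAddEquivOfEq hkerq.symm).trans
      (QuotientAddGroup.quotientKerEquivOfSurjective q hqsurj) with hα2
  have hα2mk : ∀ z : (X1 →₀ ℤ) × (X3 →₀ ℤ), α2 (QuotientAddGroup.mk z) = q z := by
    intro z
    rw [hα2]
    rfl
  -- β2 data
  set P : (blockC A B Y).ker →+ F3 := β3.toAddMonoidHom.comp (snakeP' A B Y) with hP
  have hP_apply : ∀ p : (blockC A B Y).ker, P p = β3 (snakeP' A B Y p) := fun p => rfl
  have hCmem : ∀ p : (blockC A B Y).ker,
      A (p : (X1' →₀ ℤ) × (X3' →₀ ℤ)).1 + Y (p : (X1' →₀ ℤ) × (X3' →₀ ℤ)).2 = 0 ∧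
        B (p : (X1' →₀ ℤ) × (X3' →₀ ℤ)).2 = 0 := by
    intro p
    have hp : blockC A B Y (p : (X1' →₀ ℤ) × (X3' →₀ ℤ)) = 0 := p.2
    constructor
    · exact congrArg Prod.fst hp
    · exact congrArg Prod.snd hp
  have hPmem : ∀ p : (blockC A B Y).ker, P p ∈ γ'.range := by
    intro p
    rw [h3]
    apply AddMonoidHom.mem_ker.mpr
    rw [hP_apply, ← hii (snakeP' A B Y p)]
    have hY : Y ((snakeP' A B Y p : B.ker) : X3' →₀ ℤ) =
        - A (p : (X1' →₀ ℤ) × (X3' →₀ ℤ)).1 := by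
      have := (hCmem p).1
      have hcoe : ((snakeP' A B Y p : B.ker) : X3' →₀ ℤ)
          = (p : (X1' →₀ ℤ) × (X3' →₀ ℤ)).2 := rfl
      rw [hcoe]
      exact eq_neg_of_add_eq_zero_right this
    rw [hY]
    have : mkA (- A (p : (X1' →₀ ℤ) × (X3' →₀ ℤ)).1) = 0 := by
      rw [hmkA, QuotientAddGroup.mk'_apply, QuotientAddGroup.eq_zero_iff]
      exact ⟨-(p : (X1' →₀ ℤ) × (X3' →₀ ℤ)).1, map_neg A _⟩
    rw [this, map_zero]
  set Pk : (blockC A B Y).ker →+ γ'.range := P.codRestrict _ hPmem with hPk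
  have hPk_coe : ∀ p, (Pk p : F3) = P p := fun p => rfl
  have hPksurj : Function.Surjective Pk := by
    intro k
    have hk : (k : F3) ∈ δ.ker := h3 ▸ k.2
    set η : B.ker := β3.symm (k : F3) with hηdef
    have hδ0 : δ (β3 η) = 0 := by
      rw [hηdef, β3.apply_symm_apply]
      exact AddMonoidHom.mem_ker.mp hk
    have h0 : mkA (Y ↑η) = 0 := by
      apply α1.injective
      rw [hii, hδ0, map_zero]
    have hYA : Y ↑η ∈ A.range := by
      rwa [hmkA, QuotientAddGroup.mk'_apply, QuotientAddGroup.eq_zero_iff] at h0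
    obtain ⟨ξ, hξ⟩ := hYA
    have hmem : (-ξ, (η : X3' →₀ ℤ)) ∈ (blockC A B Y).ker := by
      apply AddMonoidHom.mem_ker.mpr
      rw [blockC_apply]
      refine Prod.ext ?_ ?_
      · show A (-ξ) + Y ↑η = 0
        rw [map_neg, hξ]; abel
      · exact η.2
    refine ⟨⟨(-ξ, (η : X3' →₀ ℤ)), hmem⟩, ?_⟩
    apply Subtype.ext
    rw [hPk_coe, hP_apply]
    have hsp : snakeP' A B Y ⟨(-ξ, (η : X3' →₀ ℤ)), hmem⟩ = η := Subtype.ext rfl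
    rw [hsp, hηdef, β3.apply_symm_apply]
  -- sections
  obtain ⟨t, ht⟩ := lift_of_equiv eK γ'.rangeRestrict (AddMonoidHom.id _)
    (fun k => γ'.rangeRestrict_surjective k)
  have ht' : ∀ k : γ'.range, γ' (t k) = (k : F3) := by
    intro k
    have := ht k
    exact congrArg Subtype.val this
  obtain ⟨s, hs⟩ := lift_of_equiv eK Pk (AddMonoidHom.id _) (fun k => hPksurj k)
  set d : (blockC A B Y).ker →+ (blockC A B Y).ker :=
    AddMonoidHom.id _ - s.comp Pk with hd
  have hdP : ∀ p, Pk (d p) = 0 := by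
    intro p
    rw [hd]
    simp only [AddMonoidHom.sub_apply, AddMonoidHom.id_apply, AddMonoidHom.comp_apply,
      map_sub, hs]
    simp
  have hd2 : ∀ p : (blockC A B Y).ker, ((d p : (X1' →₀ ℤ) × (X3' →₀ ℤ))).2 = 0 := by
    intro p
    have h0 : P (d p) = 0 := congrArg Subtype.val (hdP p)
    rw [hP_apply] at h0
    have h1 : snakeP' A B Y (d p) = 0 := by
      apply β3.injective
      rw [h0, map_zero]
    exact congrArg Subtype.val h1
  have hd1 : ∀ p : (blockC A B Y).ker, A ((d p : (X1' →₀ ℤ) × (X3' →₀ ℤ)).1) = 0 := by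
    intro p
    have h0 := (hCmem (d p)).1
    rw [hd2 p, map_zero, add_zero] at h0
    exact h0
  set ξh : (blockC A B Y).ker →+ A.ker :=
    AddMonoidHom.mk' (fun p => ⟨((d p : (X1' →₀ ℤ) × (X3' →₀ ℤ))).1,
      AddMonoidHom.mem_ker.mpr (hd1 p)⟩)
      (fun a b => Subtype.ext (by simp only [map_add d]; rfl)) with hξh
  have hξh_coe : ∀ p, ((ξh p : X1' →₀ ℤ)) = ((d p : (X1' →₀ ℤ) × (X3' →₀ ℤ))).1 :=
    fun p => rfl
  set β2f : (blockC A B Y).ker →+ F2 :=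
    (ε'.comp (β1.toAddMonoidHom.comp ξh)) + (t.comp Pk) with hβ2f
  have hβ2f_apply : ∀ p, β2f p = ε' (β1 (ξh p)) + t (Pk p) := fun p => rfl
  have hγ'β2 : ∀ p, γ' (β2f p) = P p := by
    intro p
    rw [hβ2f_apply, map_add, hγ'ε', zero_add, ht']
    exact hPk_coe p
  have hPkI' : ∀ ξ : A.ker, Pk (snakeI' A B Y ξ) = 0 := by
    intro ξ
    apply Subtype.ext
    rw [hPk_coe, hP_apply]
    have hsp : snakeP' A B Y (snakeI' A B Y ξ) = 0 := Subtype.ext rfl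
    rw [hsp, map_zero]
    rfl
  have hdI' : ∀ ξ : A.ker, d (snakeI' A B Y ξ) = snakeI' A B Y ξ := by
    intro ξ
    rw [hd]
    simp only [AddMonoidHom.sub_apply, AddMonoidHom.id_apply, AddMonoidHom.comp_apply,
      hPkI', map_zero]
    simp
  have hβ2I' : ∀ ξ : A.ker, β2f (snakeI' A B Y ξ) = ε' (β1 ξ) := by
    intro ξ
    rw [hβ2f_apply, hPkI', map_zero, add_zero]
    have : ξh (snakeI' A B Y ξ) = ξ := by
      apply Subtype.ext
      rw [hξh_coe, hdI']
      rfl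
    rw [this]
  have hinj : Function.Injective β2f := by
    apply (injective_iff_map_eq_zero _).mpr
    intro p hp
    have h0 : P p = 0 := by rw [← hγ'β2, hp, map_zero]
    have hPk0 : Pk p = 0 := Subtype.ext h0
    have hdp : d p = p := by
      rw [hd]
      simp only [AddMonoidHom.sub_apply, AddMonoidHom.id_apply, AddMonoidHom.comp_apply,
        hPk0, map_zero]
      simp
    have hε'0 : ε' (β1 (ξh p)) = 0 := by
      rw [hβ2f_apply, hPk0, map_zero, add_zero] at hp
      exact hp
    have hξ0 : ξh p = 0 := by
      apply β1.injective
      rw [map_zero]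
      apply hε'
      rw [hε'0, map_zero]
    apply Subtype.ext
    refine Prod.ext ?_ ?_
    · show ((p : (X1' →₀ ℤ) × (X3' →₀ ℤ))).1 = 0
      have := congrArg Subtype.val hξ0
      rw [hξh_coe, hdp] at this
      exact this
    · show ((p : (X1' →₀ ℤ) × (X3' →₀ ℤ))).2 = 0
      have := hd2 p
      rw [hdp] at this
      exact this
  have hsurj : Function.Surjective β2f := by
    intro f2
    set k : γ'.range := ⟨γ' f2, AddMonoidHom.mem_range.mpr ⟨f2, rfl⟩⟩ with hk
    have h1' : γ' (f2 - t k) = 0 := by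
      rw [map_sub, ht', hk, sub_self]
    have h2' : f2 - t k ∈ ε'.range := by
      rw [h2]; exact AddMonoidHom.mem_ker.mpr h1'
    obtain ⟨f1, hf1⟩ := h2'
    obtain ⟨ξ1, hξ1⟩ := β1.surjective f1
    refine ⟨snakeI' A B Y ξ1 + s k, ?_⟩
    have hPkq : Pk (snakeI' A B Y ξ1 + s k) = k := by
      rw [map_add, hPkI', zero_add, hs]
      rfl
    have hdq : d (snakeI' A B Y ξ1 + s k) = snakeI' A B Y ξ1 := by
      rw [hd]
      simp only [AddMonoidHom.sub_apply, AddMonoidHom.id_apply, AddMonoidHom.comp_apply,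
        hPkq]
      abel
    have hξq : ξh (snakeI' A B Y ξ1 + s k) = ξ1 := by
      apply Subtype.ext
      rw [hξh_coe, hdq]
      rfl
    rw [hβ2f_apply, hPkq, hξq, hξ1, hf1]
    abel
  set β2 : (blockC A B Y).ker ≃+ F2 := AddEquiv.ofBijective β2f ⟨hinj, hsurj⟩ with hβ2
  have hβ2_apply : ∀ p, β2 p = β2f p := fun p => rfl
  refine ⟨α2, β2, ?_, ?_, ?_, ?_, ?_⟩
  · intro x
    induction x using QuotientAddGroup.induction_on with
    | H u =>
      have hIbar : snakeIbar A B Y (QuotientAddGroup.mk u)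
          = QuotientAddGroup.mk ((u, 0) : (X1 →₀ ℤ) × (X3 →₀ ℤ)) := rfl
      rw [hIbar, hα2mk, hq_apply]
      show ε (α1 (mkA u)) + q3 0 = ε (α1 (QuotientAddGroup.mk u))
      rw [map_zero, add_zero]
      rfl
  · intro c
    induction c using QuotientAddGroup.induction_on with
    | H z =>
      obtain ⟨u, y⟩ := z
      have hPbar : snakePbar A B Y (QuotientAddGroup.mk ((u, y) : (X1 →₀ ℤ) × (X3 →₀ ℤ)))
          = QuotientAddGroup.mk y := rfl
      rw [hPbar, hα2mk, hq_apply, map_add, hγε, zero_add, hq3]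
      rfl
  · intro ξ
    rw [hβ2_apply, hβ2I']
  · intro p
    rw [hβ2_apply, hγ'β2, hP_apply]
  · intro η
    exact hii η

end Master

set_option maxHeartbeats 2000000 in
set_option synthInstance.maxHeartbeats 200000 in
/-- In the situation of Statement 8, if additionally `Z : ℤ^{X3'} → ℤ^{X1}`
is given and either `A` admits `A'` with `A∘A' - id` entrywise nonnegative, or `B` admits
`B'` with `B'∘B - id` entrywise nonnegative, then `Y`, `α2`, `β2` satisfying the five
commutativity conditions may be chosen with all matrix entries of `Y - Z` nonnegative. -/
theorem stmt11 {X1 X1' X3 X3' : Type}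
    [Countable X1] [Countable X1'] [Countable X3] [Countable X3']
    (G1 G2 G3 F1 F2 F3 : Type)
    [AddCommGroup G1] [AddCommGroup G2] [AddCommGroup G3]
    [AddCommGroup F1] [AddCommGroup F2] [AddCommGroup F3]
    [Module.Free ℤ F1] [Module.Free ℤ F2] [Module.Free ℤ F3]
    (ε : G1 →+ G2) (γ : G2 →+ G3) (ε' : F1 →+ F2) (γ' : F2 →+ F3) (δ : F3 →+ G1)
    (hγ : Function.Surjective γ) (hε' : Function.Injective ε')
    (h1 : ε.range = γ.ker) (h2 : ε'.range = γ'.ker)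
    (h3 : γ'.range = δ.ker) (h4 : δ.range = ε.ker)
    (A : (X1' →₀ ℤ) →+ (X1 →₀ ℤ)) (B : (X3' →₀ ℤ) →+ (X3 →₀ ℤ))
    (α1 : ((X1 →₀ ℤ) ⧸ A.range) ≃+ G1) (β1 : A.ker ≃+ F1)
    (α3 : ((X3 →₀ ℤ) ⧸ B.range) ≃+ G3) (β3 : B.ker ≃+ F3)
    (Z : (X3' →₀ ℤ) →+ (X1 →₀ ℤ))
    (hpos :
      (∃ A' : (X1 →₀ ℤ) →+ (X1' →₀ ℤ),
        ∀ x y : X1, 0 ≤ ((A.comp A' - AddMonoidHom.id (X1 →₀ ℤ)) (Finsupp.single y 1)) x) ∨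
      (∃ B' : (X3 →₀ ℤ) →+ (X3' →₀ ℤ),
        ∀ x y : X3', 0 ≤ ((B'.comp B - AddMonoidHom.id (X3' →₀ ℤ)) (Finsupp.single y 1)) x)) :
    ∃ (Y : (X3' →₀ ℤ) →+ (X1 →₀ ℤ))
      (α2 : (((X1 →₀ ℤ) × (X3 →₀ ℤ)) ⧸ (blockC A B Y).range) ≃+ G2)
      (β2 : (blockC A B Y).ker ≃+ F2),
      (∀ (x : X1) (y : X3'), 0 ≤ ((Y - Z) (Finsupp.single y 1)) x) ∧
      (∀ x : (X1 →₀ ℤ) ⧸ A.range, α2 (snakeIbar A B Y x) = ε (α1 x)) ∧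
      (∀ c : ((X1 →₀ ℤ) × (X3 →₀ ℤ)) ⧸ (blockC A B Y).range,
        α3 (snakePbar A B Y c) = γ (α2 c)) ∧
      (∀ ξ : A.ker, β2 (snakeI' A B Y ξ) = ε' (β1 ξ)) ∧
      (∀ p : (blockC A B Y).ker, γ' (β2 p) = β3 (snakeP' A B Y p)) ∧
      (∀ η : B.ker, α1 (snakeDelta A B Y η) = δ (β3 η)) := by
  classical
  set mkA := QuotientAddGroup.mk' A.range with hmkA
  set mkB := QuotientAddGroup.mk' B.range with hmkB
  have hγε : ∀ u : G1, γ (ε u) = 0 := by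
    intro u
    have h : ε u ∈ γ.ker := h1 ▸ AddMonoidHom.mem_range.mpr ⟨u, rfl⟩
    exact AddMonoidHom.mem_ker.mp h
  have hεδ : ∀ f : F3, ε (δ f) = 0 := by
    intro f
    have h : δ f ∈ ε.ker := h4 ▸ AddMonoidHom.mem_range.mpr ⟨f, rfl⟩
    exact AddMonoidHom.mem_ker.mp h
  have hsurj1 : ∀ g : G1, ∃ x, α1 (mkA x) = g := by
    intro g
    obtain ⟨xq, hxq⟩ := α1.surjective g
    obtain ⟨x, rfl⟩ := QuotientAddGroup.mk'_surjective A.range xq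
    exact ⟨x, hxq⟩
  -- the free resolution data for γ'.range
  set T : AddSubgroup B.ker := AddSubgroup.comap (β3 : B.ker ≃+ F3).toAddMonoidHom γ'.range
    with hT
  set U : AddSubgroup (X3' →₀ ℤ) := T.map B.ker.subtype with hU
  obtain ⟨ιK, eK0, -⟩ := countable_subgroup_free U
  have heA : ∀ k : F3, k ∈ γ'.range → β3.symm k ∈ T := by
    intro k hk
    show β3 (β3.symm k) ∈ γ'.range
    rwa [β3.apply_symm_apply]
  set eA : γ'.range ≃+ T :=
    { toFun := fun k => ⟨β3.symm (k : F3), heA _ k.2⟩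
      invFun := fun x => ⟨β3 (x : B.ker), x.2⟩
      left_inv := fun k => Subtype.ext (β3.apply_symm_apply _)
      right_inv := fun x => Subtype.ext (β3.symm_apply_apply _)
      map_add' := fun a b => Subtype.ext (by
        show β3.symm ((a : F3) + (b : F3)) = β3.symm (a : F3) + β3.symm (b : F3)
        rw [map_add]) } with heAdef
  set eB : T ≃+ U := AddSubgroup.equivMapOfInjective T B.ker.subtype
    (Subtype.coe_injective) with heB
  set eK : γ'.range ≃+ (ιK →₀ ℤ) := (eA.trans eB).trans eK0 with heK
  -- q3
  obtain ⟨q3, hq3⟩ := lift_finsupp γ (α3.toAddMonoidHom.comp mkB)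
    (fun i => hγ ((α3.toAddMonoidHom.comp mkB) (Finsupp.single i 1)))
  -- retraction onto ker B
  obtain ⟨ιR, eR, -⟩ := countable_subgroup_free B.range
  obtain ⟨u, hu⟩ := lift_of_equiv eR B.rangeRestrict (AddMonoidHom.id _)
    (fun w => B.rangeRestrict_surjective w)
  have hu' : ∀ w : B.range, B (u w) = (w : X3 →₀ ℤ) :=
    fun w => congrArg Subtype.val (hu w)
  have hrmem : ∀ η : X3' →₀ ℤ, η - u (B.rangeRestrict η) ∈ B.ker := by
    intro η
    apply AddMonoidHom.mem_ker.mpr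
    rw [map_sub, hu']
    show B η - B η = 0
    rw [sub_self]
  set r : (X3' →₀ ℤ) →+ B.ker :=
    AddMonoidHom.mk' (fun η => ⟨η - u (B.rangeRestrict η), hrmem η⟩)
      (fun a b => Subtype.ext (by
        show (a + b) - u (B.rangeRestrict (a + b)) = _
        rw [map_add, map_add]
        show _ = (a - u (B.rangeRestrict a)) + (b - u (B.rangeRestrict b))
        abel)) with hrdef
  have hrk : ∀ κ : X3' →₀ ℤ, B κ = 0 → (r κ : X3' →₀ ℤ) = κ := by
    intro κ hκ
    show κ - u (B.rangeRestrict κ) = κ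
    have h0 : B.rangeRestrict κ = 0 := Subtype.ext hκ
    rw [h0, map_zero, sub_zero]
  -- Y1
  obtain ⟨ι2, e2, -⟩ := countable_subgroup_free B.ker
  obtain ⟨Y1, hY1⟩ := lift_of_equiv e2 (α1.toAddMonoidHom.comp mkA)
    (δ.comp (β3 : B.ker ≃+ F3).toAddMonoidHom)
    (fun κ => hsurj1 _)
  -- Y2
  obtain ⟨Y2, hY2⟩ := lift_finsupp (ε.comp (α1.toAddMonoidHom.comp mkA)) (-(q3.comp B))
    (by
      intro i
      have hBσ : mkB (B (Finsupp.single i 1)) = 0 := by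
        rw [hmkB, QuotientAddGroup.mk'_apply, QuotientAddGroup.eq_zero_iff]
        exact ⟨Finsupp.single i 1, rfl⟩
      have hker : γ (-(q3.comp B) (Finsupp.single i 1)) = 0 := by
        show γ (-(q3 (B (Finsupp.single i 1)))) = 0
        rw [map_neg, hq3]
        show -(α3 (mkB (B (Finsupp.single i 1)))) = 0
        rw [hBσ, map_zero, neg_zero]
      have hrange : (-(q3.comp B)) (Finsupp.single i 1) ∈ ε.range := by
        rw [h1]; exact AddMonoidHom.mem_ker.mpr hker
      obtain ⟨g1, hg1⟩ := hrange
      obtain ⟨x, hx⟩ := hsurj1 g1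
      exact ⟨x, by rw [← hg1, ← hx]; rfl⟩)
  set Y0 : (X3' →₀ ℤ) →+ (X1 →₀ ℤ) :=
    Y1.comp r + Y2.comp (AddMonoidHom.id _ - B.ker.subtype.comp r) with hY0
  have hY0_apply : ∀ η, Y0 η = Y1 (r η) + Y2 (η - (r η : X3' →₀ ℤ)) := fun η => rfl
  have hi0 : ∀ η, ε (α1 (mkA (Y0 η))) = - q3 (B η) := by
    intro η
    rw [hY0_apply, map_add, map_add, map_add]
    have h1' : α1 (mkA (Y1 (r η))) = δ (β3 (r η)) := hY1 (r η)
    have h2' : ε (α1 (mkA (Y2 (η - (r η : X3' →₀ ℤ))))) =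
        -(q3 (B (η - (r η : X3' →₀ ℤ)))) := hY2 _
    have hBr : B ((r η : X3' →₀ ℤ)) = 0 := (r η).2
    rw [h1', hεδ, zero_add, h2', map_sub, hBr, sub_zero]
  have hii0 : ∀ κ : B.ker, α1 (mkA (Y0 (κ : X3' →₀ ℤ))) = δ (β3 κ) := by
    intro κ
    have h2' : r (κ : X3' →₀ ℤ) = κ := Subtype.ext (hrk _ κ.2)
    rw [hY0_apply, h2', sub_self, map_zero, add_zero]
    exact hY1 κ
  -- the positive correction
  set D : (X3' →₀ ℤ) →+ (X1 →₀ ℤ) := Z - Y0 with hD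
  set posf : (X1 →₀ ℤ) → (X1 →₀ ℤ) :=
    fun v => v.mapRange (fun z => max z 0) (by simp) with hposf
  have hposf_apply : ∀ v x, (posf v) x = max (v x) 0 := by
    intro v x
    rw [hposf]
    exact Finsupp.mapRange_apply
  set M : (X3' →₀ ℤ) →+ (X1 →₀ ℤ) := Finsupp.liftAddHom
    (fun y => (zmultiplesHom (X1 →₀ ℤ)) (posf (D (Finsupp.single y 1)))) with hM
  have hMσ : ∀ y, M (Finsupp.single y 1) = posf (D (Finsupp.single y 1)) := by
    intro y
    rw [hM, Finsupp.liftAddHom_apply_single]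
    exact one_zsmul _
  have hMentries : ∀ (x : X1) (y : X3'), 0 ≤ (M (Finsupp.single y 1)) x := by
    intro x y
    rw [hMσ, hposf_apply]
    exact le_max_right _ _
  rcases hpos with ⟨A', hA'⟩ | ⟨B', hB'⟩
  · -- case A'
    set Y : (X3' →₀ ℤ) →+ (X1 →₀ ℤ) := Y0 + A.comp (A'.comp M) with hYdef
    have hY_apply : ∀ η, Y η = Y0 η + A (A' (M η)) := fun η => rfl
    have hmkAY : ∀ η, mkA (Y η) = mkA (Y0 η) := by
      intro η
      rw [hY_apply, map_add]
      have h0 : mkA (A (A' (M η))) = 0 := by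
        rw [hmkA, QuotientAddGroup.mk'_apply, QuotientAddGroup.eq_zero_iff]
        exact ⟨A' (M η), rfl⟩
      rw [h0, add_zero]
    have hi : ∀ η, ε (α1 (mkA (Y η))) = - q3 (B η) := by
      intro η; rw [hmkAY]; exact hi0 η
    have hii : ∀ κ : B.ker, α1 (mkA (Y (κ : X3' →₀ ℤ))) = δ (β3 κ) := by
      intro κ; rw [hmkAY]; exact hii0 κ
    have hposY : ∀ (x : X1) (y : X3'), 0 ≤ ((Y - Z) (Finsupp.single y 1)) x := by
      intro x y
      set σ : X3' →₀ ℤ := Finsupp.single y 1 with hσ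
      have hsplit : (Y - Z) σ = (M σ - D σ) +
          ((A.comp A' - AddMonoidHom.id (X1 →₀ ℤ)) (M σ)) := by
        simp only [AddMonoidHom.sub_apply, AddMonoidHom.add_apply, AddMonoidHom.comp_apply,
          AddMonoidHom.id_apply, hD, hYdef]
        abel
      rw [hsplit, Finsupp.add_apply, Finsupp.sub_apply]
      have h1' : 0 ≤ M σ x - D σ x := by
        rw [hσ, hMσ, hposf_apply]
        simp
      have h2' : 0 ≤ ((A.comp A' - AddMonoidHom.id (X1 →₀ ℤ)) (M σ)) x := by
        apply hom_apply_nonneg _ hA'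
        intro y'
        rw [hσ, hMσ, hposf_apply]
        exact le_max_right _ _
      omega
    obtain ⟨α2, β2, ha, hb, hc, hd, he⟩ := master ε γ ε' γ' δ hε' h1 h2 h3 h4 A B
      α1 β1 α3 β3 Y q3 hq3 hi hii ιK eK
    exact ⟨Y, α2, β2, hposY, ha, hb, hc, hd, he⟩
  · -- case B'
    set Y : (X3' →₀ ℤ) →+ (X1 →₀ ℤ) := Y0 + (M.comp B').comp B with hYdef
    have hY_apply : ∀ η, Y η = Y0 η + M (B' (B η)) := fun η => rfl
    set q3' : (X3 →₀ ℤ) →+ G2 :=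
      q3 - (ε.comp (α1.toAddMonoidHom.comp mkA)).comp (M.comp B') with hq3'def
    have hq3'_apply : ∀ y, q3' y = q3 y - ε (α1 (mkA (M (B' y)))) := fun y => rfl
    have hq3' : ∀ y, γ (q3' y) = α3 (mkB y) := by
      intro y
      rw [hq3'_apply, map_sub, hγε, sub_zero, hq3]
      rfl
    have hi : ∀ η, ε (α1 (mkA (Y η))) = - q3' (B η) := by
      intro η
      rw [hY_apply, map_add, map_add, map_add, hi0, hq3'_apply]
      abel
    have hii : ∀ κ : B.ker, α1 (mkA (Y (κ : X3' →₀ ℤ))) = δ (β3 κ) := by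
      intro κ
      have hκ : B (κ : X3' →₀ ℤ) = 0 := κ.2
      rw [hY_apply, hκ, map_zero, map_zero, add_zero]
      exact hii0 κ
    have hposY : ∀ (x : X1) (y : X3'), 0 ≤ ((Y - Z) (Finsupp.single y 1)) x := by
      intro x y
      set σ : X3' →₀ ℤ := Finsupp.single y 1 with hσ
      have hM' : M (B' (B σ)) = M σ + M ((B'.comp B - AddMonoidHom.id (X3' →₀ ℤ)) σ) := by
        rw [← map_add]
        congr 1
        simp only [AddMonoidHom.sub_apply, AddMonoidHom.comp_apply, AddMonoidHom.id_apply]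
        abel
      have hDσ : D σ = Z σ - Y0 σ := rfl
      have hsplit : (Y - Z) σ = (M σ - D σ) +
          M ((B'.comp B - AddMonoidHom.id (X3' →₀ ℤ)) σ) := by
        rw [AddMonoidHom.sub_apply, hY_apply, hM', hDσ]
        abel
      rw [hsplit, Finsupp.add_apply, Finsupp.sub_apply]
      have h1' : 0 ≤ M σ x - D σ x := by
        rw [hσ, hMσ, hposf_apply]
        simp
      have h2' : 0 ≤ (M ((B'.comp B - AddMonoidHom.id (X3' →₀ ℤ)) σ)) x := by
        apply hom_apply_nonneg M hMentries
        intro y'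
        rw [hσ]
        exact hB' y' y
      omega
    obtain ⟨α2, β2, ha, hb, hc, hd, he⟩ := master ε γ ε' γ' δ hε' h1 h2 h3 h4 A B
      α1 β1 α3 β3 Y q3' hq3' hi hii ιK eK
    exact ⟨Y, α2, β2, hposY, ha, hb, hc, hd, he⟩
end

section
/- Let (ε : G1 → G2, γ : G2 → G3, ε' : F1 → F2, γ' : F2 → F3, δ : F3 → G1) be a cyclic six-term exact sequence of abelian groups with F1, F2, F3 free abelian, let A : ℤ^{X1'} → ℤ^{X1} and B : ℤ^{X3'} → ℤ^{X3} be homomorphisms where X1 and X3 are finite index sets (X1', X3' countable), and suppose given isomorphisms α1 : coker A → G1, β1 : ker A → F1, α3 : coker B → G3, β3 : ker B → F3. Suppose g2 ∈ G2 satisfies α3([𝟙]) = γ(g2), where 𝟙 ∈ ℤ^{X3} is the all-ones vector, and suppose there exist indices i, j ∈ X3 such that B(i, k) < B(j, k) for every k ∈ X3'. Then a homomorphism Y : ℤ^{X3'} → ℤ^{X1} and isomorphisms α2 : coker C → G2, β2 : ker C → F2 (where C = (A Y; 0 B)) satisfying the five commutativity conditions (a) α2 ∘ Ī = ε ∘ α1,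 (b) α3 ∘ P̄ = γ ∘ α2, (c) β2 ∘ I' = ε' ∘ β1, (d) γ' ∘ β2 = β3 ∘ P', (e) α1 ∘ [Y] = δ ∘ β3, may be chosen with the additional property that α2([𝟙]) = g2, where 𝟙 ∈ ℤ^{X1} ⊕ ℤ^{X3} is the all-ones vector. -/
section Aux

open Finsupp Submodule

variable (N : Submodule ℤ (ℕ →₀ ℤ))

private noncomputable def Sfil (n : ℕ) : Submodule ℤ (ℕ →₀ ℤ) :=
  N ⊓ Finsupp.supported ℤ ℤ {i | i < n}

private lemma mem_sfil {n : ℕ} {g : ℕ →₀ ℤ} :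
    g ∈ Sfil N n ↔ g ∈ N ∧ ∀ i, ¬ i < n → g i = 0 := by
  rw [Sfil, Submodule.mem_inf, Finsupp.mem_supported']
  simp only [Set.mem_setOf_eq]

private noncomputable def cIdeal (n : ℕ) : Submodule ℤ ℤ :=
  (Sfil N (n + 1)).map (Finsupp.lapply n)

private noncomputable def dgen (n : ℕ) : ℤ :=
  (IsPrincipalIdealRing.principal (cIdeal N n)).generator

private lemma dgen_mem (n : ℕ) : dgen N n ∈ cIdeal N n := by
  haveI := IsPrincipalIdealRing.principal (cIdeal N n)
  exact Submodule.IsPrincipal.generator_mem _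

private lemma mem_cIdeal_iff (n : ℕ) {a : ℤ} :
    a ∈ cIdeal N n ↔ ∃ c : ℤ, a = c • dgen N n := by
  haveI := IsPrincipalIdealRing.principal (cIdeal N n)
  exact Submodule.IsPrincipal.mem_iff_eq_smul_generator _

private noncomputable def xelt (n : ℕ) : ℕ →₀ ℤ :=
  (Submodule.mem_map.mp (dgen_mem N n)).choose

private lemma xelt_mem (n : ℕ) : xelt N n ∈ Sfil N (n + 1) :=
  (Submodule.mem_map.mp (dgen_mem N n)).choose_spec.1

private lemma xelt_apply (n : ℕ) : xelt N n n = dgen N n :=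
  (Submodule.mem_map.mp (dgen_mem N n)).choose_spec.2

private lemma xelt_apply_of_lt {n m : ℕ} (h : n < m) : xelt N n m = 0 := by
  have := (mem_sfil N).mp (xelt_mem N n)
  exact this.2 m (by omega)

private lemma sfil_le_span (n : ℕ) :
    Sfil N n ≤ span ℤ (Set.range fun t : {k // dgen N k ≠ 0} => xelt N t.1) := by
  induction n with
  | zero =>
    intro g hg
    have : g = 0 := by
      ext i
      exact ((mem_sfil N).mp hg).2 i (by omega)
    simp [this]
  | succ n ih =>
    intro g hg
    obtain ⟨hgN, hgs⟩ := (mem_sfil N).mp hg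
    have hmem : g n ∈ cIdeal N n := by
      refine Submodule.mem_map.mpr ⟨g, ?_, rfl⟩
      exact (mem_sfil N).mpr ⟨hgN, fun i hi => hgs i (by omega)⟩
    obtain ⟨c, hc⟩ := (mem_cIdeal_iff N n).mp hmem
    by_cases hd : dgen N n = 0
    · refine ih ?_
      refine (mem_sfil N).mpr ⟨hgN, fun i hi => ?_⟩
      rcases Nat.lt_or_ge i (n + 1) with h | h
      · have : i = n := by omega
        subst this
        simp [hc, hd]
      · exact hgs i (by omega)
    · have hx : xelt N n ∈ span ℤ (Set.range fun t : {k // dgen N k ≠ 0} => xelt N t.1) :=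
        Submodule.subset_span ⟨⟨n, hd⟩, rfl⟩
      have hg' : g - c • xelt N n ∈ Sfil N n := by
        refine (mem_sfil N).mpr ⟨?_, fun i hi => ?_⟩
        · exact Submodule.sub_mem _ hgN
            (Submodule.smul_mem _ _ ((mem_sfil N).mp (xelt_mem N n)).1)
        · rcases Nat.lt_or_ge i (n + 1) with h | h
          · have : i = n := by omega
            subst this
            simp [hc, xelt_apply, mul_comm]
          · simp [hgs i (by omega), xelt_apply_of_lt N (show n < i by omega)]
      have := ih hg'
      have hgeq : g = (g - c • xelt N n) + c • xelt N n := by abel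
      rw [hgeq]
      exact Submodule.add_mem _ this (Submodule.smul_mem _ _ hx)

private lemma mem_sfil_of_mem {g : ℕ →₀ ℤ} (hg : g ∈ N) :
    g ∈ Sfil N (g.support.sup id + 1) := by
  refine (mem_sfil N).mpr ⟨hg, fun i hi => ?_⟩
  by_contra h
  have : i ∈ g.support := Finsupp.mem_support_iff.mpr h
  have := Finset.le_sup (f := id) this
  simp only [id] at this
  omega

private lemma li_xelt :
    LinearIndependent ℤ (fun t : {k // dgen N k ≠ 0} => xelt N t.1) := by
  rw [linearIndependent_iff']
  intro s g hsum i hi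
  by_contra hgi
  classical
  set s' := s.filter (fun j => g j ≠ 0) with hs'
  have hne : s'.Nonempty := ⟨i, Finset.mem_filter.mpr ⟨hi, hgi⟩⟩
  obtain ⟨m, hm, hmax⟩ := Finset.exists_max_image s' (fun j => j.1) hne
  have hcoord := congrArg (fun f : ℕ →₀ ℤ => f m.1) hsum
  simp only [Finsupp.finset_sum_apply, Finsupp.smul_apply, smul_eq_mul, Finsupp.coe_zero,
    Pi.zero_apply] at hcoord
  have hsum' : ∑ j ∈ s, g j * xelt N j.1 m.1 = g m * dgen N m.1 := by
    rw [Finset.sum_eq_single_of_mem m (Finset.mem_filter.mp hm).1]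
    · rw [xelt_apply]
    · intro j hj hne'
      by_cases hgj : g j = 0
      · simp [hgj]
      · have hjm : j.1 ≤ m.1 := hmax j (Finset.mem_filter.mpr ⟨hj, hgj⟩)
        have : j.1 < m.1 := lt_of_le_of_ne hjm (fun h => hne' (Subtype.ext h))
        rw [xelt_apply_of_lt N this, mul_zero]
  rw [hsum'] at hcoord
  rcases mul_eq_zero.mp hcoord with h | h
  · exact (Finset.mem_filter.mp hm).2 h
  · exact m.2 h

private theorem submodule_nat_free : Module.Free ℤ N := by
  classical
  have hspan : ∀ g ∈ N, g ∈ span ℤ (Set.range fun t : {k // dgen N k ≠ 0} => xelt N t.1) :=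
    fun g hg => sfil_le_span N _ (mem_sfil_of_mem N hg)
  have hxN : ∀ t : {k // dgen N k ≠ 0}, xelt N t.1 ∈ N :=
    fun t => ((mem_sfil N).mp (xelt_mem N t.1)).1
  let v : {k // dgen N k ≠ 0} → N := fun t => ⟨xelt N t.1, hxN t⟩
  have hli : LinearIndependent ℤ v := by
    have := li_xelt N
    exact LinearIndependent.of_comp N.subtype (by convert this using 1; rfl)
  have hsp : ⊤ ≤ span ℤ (Set.range v) := by
    intro g _
    have hgin : (g : ℕ →₀ ℤ) ∈ span ℤ
        (Set.range fun t : {k // dgen N k ≠ 0} => xelt N t.1) := hspan g g.2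
    have himg : (span ℤ (Set.range fun t : {k // dgen N k ≠ 0} => xelt N t.1)) =
        Submodule.map N.subtype (span ℤ (Set.range v)) := by
      rw [Submodule.map_span]
      congr 1
      rw [← Set.range_comp]
      rfl
    rw [himg] at hgin
    obtain ⟨h, hh, hval⟩ := hgin
    have : h = g := Subtype.ext hval
    rwa [← this]
  exact Module.Free.of_basis (Module.Basis.mk hli hsp)

private theorem submodule_countable_free {σ : Type} [Countable σ] (M : Submodule ℤ (σ →₀ ℤ)) :
    Module.Free ℤ M := by
  obtain ⟨f, hf⟩ := exists_injective_nat σ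
  let F : (σ →₀ ℤ) →ₗ[ℤ] (ℕ →₀ ℤ) := Finsupp.lmapDomain ℤ ℤ f
  have hF : Function.Injective F := Finsupp.mapDomain_injective hf
  have e := Submodule.equivMapOfInjective F hF M
  have := submodule_nat_free (M.map F)
  exact Module.Free.of_equiv e.symm

private theorem addSubgroup_countable_projective {σ : Type} [Countable σ]
    (S : AddSubgroup (σ →₀ ℤ)) : Module.Projective ℤ S := by
  haveI : Module.Free ℤ (AddSubgroup.toIntSubmodule S) := submodule_countable_free _
  have e : (AddSubgroup.toIntSubmodule S) ≃+ S :=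
    AddEquiv.mk' (Equiv.mk (fun x => ⟨x.1, x.2⟩) (fun x => ⟨x.1, x.2⟩)
      (fun x => rfl) (fun x => rfl)) (fun a b => rfl)
  exact Module.Projective.of_equiv e.toIntLinearEquiv

private lemma addHom_lift {M N P : Type} [AddCommGroup M] [AddCommGroup N] [AddCommGroup P]
    [Module.Projective ℤ P] (f : M →+ N) (g : P →+ N) (hg : ∀ p, ∃ m, f m = g p) :
    ∃ h : P →+ M, ∀ p, f (h p) = g p := by
  let f' := f.toIntLinearMap
  let g' : P →ₗ[ℤ] LinearMap.range f' :=
    LinearMap.codRestrict _ g.toIntLinearMap (fun p => by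
      obtain ⟨m, hm⟩ := hg p
      exact ⟨m, hm⟩)
  obtain ⟨h, hh⟩ := Module.projective_lifting_property f'.rangeRestrict g'
    (LinearMap.surjective_rangeRestrict f')
  refine ⟨h.toAddMonoidHom, fun p => ?_⟩
  have := LinearMap.congr_fun hh p
  exact congrArg Subtype.val this

end Aux

set_option maxHeartbeats 2000000 in
set_option synthInstance.maxHeartbeats 200000 in
/-- In the situation of Statement 8, with `X1, X3` finite, suppose
`g2 ∈ G2` satisfies `α3([𝟙]) = γ(g2)` and there are indices `i, j ∈ X3` with
`B(i,k) < B(j,k)` for every `k ∈ X3'`.  Then `Y`, `α2`, `β2` satisfying the five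
commutativity conditions may be chosen so that moreover `α2([𝟙]) = g2`. -/
theorem stmt12 {X1 X1' X3 X3' : Type}
    [Fintype X1] [Fintype X3] [Countable X1'] [Countable X3']
    (G1 G2 G3 F1 F2 F3 : Type)
    [AddCommGroup G1] [AddCommGroup G2] [AddCommGroup G3]
    [AddCommGroup F1] [AddCommGroup F2] [AddCommGroup F3]
    [Module.Free ℤ F1] [Module.Free ℤ F2] [Module.Free ℤ F3]
    (ε : G1 →+ G2) (γ : G2 →+ G3) (ε' : F1 →+ F2) (γ' : F2 →+ F3) (δ : F3 →+ G1)
    (hγ : Function.Surjective γ) (hε' : Function.Injective ε')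
    (h1 : ε.range = γ.ker) (h2 : ε'.range = γ'.ker)
    (h3 : γ'.range = δ.ker) (h4 : δ.range = ε.ker)
    (A : (X1' →₀ ℤ) →+ (X1 →₀ ℤ)) (B : (X3' →₀ ℤ) →+ (X3 →₀ ℤ))
    (α1 : ((X1 →₀ ℤ) ⧸ A.range) ≃+ G1) (β1 : A.ker ≃+ F1)
    (α3 : ((X3 →₀ ℤ) ⧸ B.range) ≃+ G3) (β3 : B.ker ≃+ F3)
    (g2 : G2)
    (hg2 : α3 (QuotientAddGroup.mk
        (Finsupp.equivFunOnFinite.symm fun _ : X3 => (1 : ℤ))) = γ g2)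
    (hB : ∃ i j : X3, ∀ k : X3',
        (B (Finsupp.single k 1)) i < (B (Finsupp.single k 1)) j) :
    ∃ (Y : (X3' →₀ ℤ) →+ (X1 →₀ ℤ))
      (α2 : (((X1 →₀ ℤ) × (X3 →₀ ℤ)) ⧸ (blockC A B Y).range) ≃+ G2)
      (β2 : (blockC A B Y).ker ≃+ F2),
      (α2 (QuotientAddGroup.mk
          ((Finsupp.equivFunOnFinite.symm fun _ : X1 => (1 : ℤ)),
            (Finsupp.equivFunOnFinite.symm fun _ : X3 => (1 : ℤ)))) = g2) ∧
      (∀ x : (X1 →₀ ℤ) ⧸ A.range, α2 (snakeIbar A B Y x) = ε (α1 x)) ∧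
      (∀ c : ((X1 →₀ ℤ) × (X3 →₀ ℤ)) ⧸ (blockC A B Y).range,
        α3 (snakePbar A B Y c) = γ (α2 c)) ∧
      (∀ ξ : A.ker, β2 (snakeI' A B Y ξ) = ε' (β1 ξ)) ∧
      (∀ p : (blockC A B Y).ker, γ' (β2 p) = β3 (snakeP' A B Y p)) ∧
      (∀ η : B.ker, α1 (snakeDelta A B Y η) = δ (β3 η)) := by
  classical
  obtain ⟨x0, -, -⟩ := hB
  set q1 : (X1 →₀ ℤ) →+ ((X1 →₀ ℤ) ⧸ A.range) := QuotientAddGroup.mk' A.range with hq1def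
  set q3 : (X3 →₀ ℤ) →+ ((X3 →₀ ℤ) ⧸ B.range) := QuotientAddGroup.mk' B.range with hq3def
  have hq1surj : Function.Surjective q1 := QuotientAddGroup.mk'_surjective A.range
  have hq3surj : Function.Surjective q3 := QuotientAddGroup.mk'_surjective B.range
  -- the map φ1 : ℤ^{X1} → G2
  set φ1 : (X1 →₀ ℤ) →+ G2 := ε.comp (α1.toAddMonoidHom.comp q1) with hφ1def
  have hφ1 : ∀ x, φ1 x = ε (α1 (q1 x)) := fun _ => rfl
  have hγφ1 : ∀ x, γ (φ1 x) = 0 := by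
    intro x
    have hmem : ε (α1 (q1 x)) ∈ γ.ker := h1 ▸ AddMonoidHom.mem_range.mpr ⟨_, rfl⟩
    exact AddMonoidHom.mem_ker.mp hmem
  have hεδ : ∀ f : F3, ε (δ f) = 0 := fun f =>
    AddMonoidHom.mem_ker.mp (h4 ▸ AddMonoidHom.mem_range.mpr ⟨f, rfl⟩)
  have hγ'ε' : ∀ f : F1, γ' (ε' f) = 0 := fun f =>
    AddMonoidHom.mem_ker.mp (h2 ▸ AddMonoidHom.mem_range.mpr ⟨f, rfl⟩)
  have hδγ' : ∀ f : F2, δ (γ' f) = 0 := fun f =>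
    AddMonoidHom.mem_ker.mp (h3 ▸ AddMonoidHom.mem_range.mpr ⟨f, rfl⟩)
  -- a lift ψ of α3 ∘ q3 through γ
  set u : X3 → G2 := fun x => Function.surjInv hγ (α3 (q3 (Finsupp.single x 1))) with hudef
  have hu : ∀ x, γ (u x) = α3 (q3 (Finsupp.single x 1)) := fun x => Function.surjInv_eq hγ _
  set ψ : (X3 →₀ ℤ) →+ G2 := Finsupp.liftAddHom (fun x => zmultiplesHom G2 (u x)) with hψdef
  have hψ : ∀ y, γ (ψ y) = α3 (q3 y) := by
    intro y
    have hext : γ.comp ψ = α3.toAddMonoidHom.comp q3 := by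
      apply Finsupp.addHom_ext
      intro x n
      show γ (ψ (Finsupp.single x n)) = α3 (q3 (Finsupp.single x n))
      have e1 : ψ (Finsupp.single x n) = n • u x := by
        rw [hψdef, Finsupp.liftAddHom_apply_single, zmultiplesHom_apply]
      have e2 : Finsupp.single x n = n • Finsupp.single x (1 : ℤ) := by
        rw [Finsupp.smul_single, smul_eq_mul, mul_one]
      rw [e1, map_zsmul, hu, e2, map_zsmul, map_zsmul]
    exact DFunLike.congr_fun hext y
  -- the all-one vectors
  set one1 : X1 →₀ ℤ := Finsupp.equivFunOnFinite.symm (fun _ => 1) with hone1def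
  set one3 : X3 →₀ ℤ := Finsupp.equivFunOnFinite.symm (fun _ => 1) with hone3def
  have hone3x0 : one3 x0 = 1 := by
    rw [hone3def]
    exact congrFun (Finsupp.equivFunOnFinite.apply_symm_apply (fun _ : X3 => (1 : ℤ))) x0
  have hg2' : α3 (q3 one3) = γ g2 := by
    rw [hq3def, QuotientAddGroup.mk'_apply]
    exact hg2
  -- the map φ3 : ℤ^{X3} → G2, normalized at the all-one vector
  set v0 : G2 := g2 - φ1 one1 - ψ one3 with hv0def
  set φ3 : (X3 →₀ ℤ) →+ G2 :=
    ((zmultiplesHom G2 v0).comp (Finsupp.applyAddHom x0)) + ψ with hφ3def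
  have hφ3 : ∀ y, φ3 y = y x0 • v0 + ψ y := fun y => rfl
  have hγv0 : γ v0 = 0 := by
    have e : γ v0 = γ g2 - γ (φ1 one1) - γ (ψ one3) := by rw [hv0def, map_sub, map_sub]
    rw [e, hγφ1, hψ, hg2', sub_zero, sub_self]
  have hγφ3 : ∀ y, γ (φ3 y) = α3 (q3 y) := by
    intro y
    rw [hφ3, map_add, map_zsmul, hγv0, smul_zero, zero_add, hψ]
  have hφ3one : φ3 one3 = g2 - φ1 one1 := by
    rw [hφ3, hone3x0, one_smul, hv0def]
    abel
  -- projectivity facts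
  haveI hprojKerB : Module.Projective ℤ B.ker := addSubgroup_countable_projective _
  haveI hprojRanB : Module.Projective ℤ B.range := addSubgroup_countable_projective _
  -- a retraction π of ℤ^{X3'} onto ker B
  obtain ⟨sB, hsB⟩ := addHom_lift B (AddSubgroup.subtype B.range)
    (fun b => AddMonoidHom.mem_range.mp b.2)
  have hrr0 : ∀ ζ : B.ker, B.rangeRestrict (↑ζ : X3' →₀ ℤ) = 0 := by
    intro ζ
    apply Subtype.ext
    rw [AddMonoidHom.coe_rangeRestrict]
    exact AddMonoidHom.mem_ker.mp ζ.2
  set π : (X3' →₀ ℤ) →+ B.ker :=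
    AddMonoidHom.mk' (fun η => ⟨η - sB (B.rangeRestrict η), by
        rw [AddMonoidHom.mem_ker, map_sub, hsB]
        rw [AddSubgroup.coe_subtype, AddMonoidHom.coe_rangeRestrict, sub_self]⟩)
      (fun a b => Subtype.ext (by
        show (a + b) - sB (B.rangeRestrict (a + b)) =
          (a - sB (B.rangeRestrict a)) + (b - sB (B.rangeRestrict b))
        rw [map_add, map_add]
        abel)) with hπdef
  have hπ : ∀ ζ : B.ker, π (↑ζ : X3' →₀ ℤ) = ζ := by
    intro ζ
    apply Subtype.ext
    show (↑ζ : X3' →₀ ℤ) - sB (B.rangeRestrict ↑ζ) = ↑ζ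
    rw [hrr0, map_zero, sub_zero]
  -- the map w on ker B
  obtain ⟨w, hw⟩ := addHom_lift q1
    (α1.symm.toAddMonoidHom.comp (δ.comp β3.toAddMonoidHom))
    (fun p => hq1surj _)
  have hw' : ∀ ζ : B.ker, q1 (w ζ) = α1.symm (δ (β3 ζ)) := fun ζ => hw ζ
  -- the map V on range B
  obtain ⟨V, hV⟩ := addHom_lift φ1 (-(φ3.comp (AddSubgroup.subtype B.range))) (fun b => by
    have hb : γ (φ3 ↑b) = 0 := by
      rw [hγφ3]
      have hb0 : q3 (↑b : X3 →₀ ℤ) = 0 := by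
        rw [hq3def, QuotientAddGroup.mk'_apply]
        exact (QuotientAddGroup.eq_zero_iff _).mpr b.2
      rw [hb0, map_zero]
    have hmem : -(φ3 ↑b) ∈ ε.range := by
      rw [h1, AddMonoidHom.mem_ker, map_neg, hb, neg_zero]
    obtain ⟨g1, hg1⟩ := AddMonoidHom.mem_range.mp hmem
    obtain ⟨z, hz⟩ := hq1surj (α1.symm g1)
    refine ⟨z, ?_⟩
    rw [hφ1, hz, α1.apply_symm_apply, hg1]
    rfl)
  have hV' : ∀ b : B.range, φ1 (V b) = -(φ3 ↑b) := by
    intro b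
    rw [hV b]
    rfl
  -- the matrix Y
  set Y : (X3' →₀ ℤ) →+ (X1 →₀ ℤ) := (w.comp π) + (V.comp B.rangeRestrict) with hYdef
  have hYapp : ∀ η, Y η = w (π η) + V (B.rangeRestrict η) := fun _ => rfl
  have hYker : ∀ ζ : B.ker, Y (↑ζ : X3' →₀ ℤ) = w ζ := by
    intro ζ
    rw [hYapp, hπ, hrr0, map_zero, add_zero]
  have hY1 : ∀ ζ : B.ker, q1 (Y (↑ζ : X3' →₀ ℤ)) = α1.symm (δ (β3 ζ)) := by
    intro ζ
    rw [hYker]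
    exact hw' ζ
  have hY2 : ∀ η, φ1 (Y η) = -(φ3 (B η)) := by
    intro η
    rw [hYapp, map_add]
    have t1 : φ1 (w (π η)) = 0 := by
      rw [hφ1, hw' (π η), α1.apply_symm_apply, hεδ]
    have t2 : φ1 (V (B.rangeRestrict η)) = -(φ3 (B η)) := by
      rw [hV']
      rw [AddMonoidHom.coe_rangeRestrict]
    rw [t1, t2, zero_add]
  -- the map φ and the equivalence α2
  set φ : ((X1 →₀ ℤ) × (X3 →₀ ℤ)) →+ G2 :=
    (φ1.comp (AddMonoidHom.fst _ _)) + (φ3.comp (AddMonoidHom.snd _ _)) with hφdef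
  have hφapp : ∀ z : (X1 →₀ ℤ) × (X3 →₀ ℤ), φ z = φ1 z.1 + φ3 z.2 := fun _ => rfl
  have hq1A : ∀ ξ, q1 (A ξ) = 0 := fun ξ => by
    rw [hq1def, QuotientAddGroup.mk'_apply]
    exact (QuotientAddGroup.eq_zero_iff _).mpr ⟨ξ, rfl⟩
  have hφ1A : ∀ ξ, φ1 (A ξ) = 0 := fun ξ => by
    rw [hφ1, hq1A, map_zero, map_zero]
  have hφC : ∀ z, φ (blockC A B Y z) = 0 := by
    rintro ⟨ξ, η⟩
    rw [blockC_apply, hφapp]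
    show φ1 (A ξ + Y η) + φ3 (B η) = 0
    rw [map_add, hY2, hφ1A]
    abel
  have hφsurj : Function.Surjective φ := by
    intro g
    obtain ⟨c3, hc3⟩ := α3.surjective (γ g)
    obtain ⟨y, hy⟩ := hq3surj c3
    have hgy : γ (g - φ3 y) = 0 := by rw [map_sub, hγφ3, hy, hc3, sub_self]
    have hmem : g - φ3 y ∈ ε.range := by rw [h1, AddMonoidHom.mem_ker]; exact hgy
    obtain ⟨g1, hg1⟩ := AddMonoidHom.mem_range.mp hmem
    obtain ⟨x, hx⟩ := hq1surj (α1.symm g1)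
    refine ⟨(x, y), ?_⟩
    rw [hφapp]
    show φ1 x + φ3 y = g
    rw [hφ1, hx, α1.apply_symm_apply, hg1]
    abel
  have hφker : ∀ z : (X1 →₀ ℤ) × (X3 →₀ ℤ), φ z = 0 → z ∈ (blockC A B Y).range := by
    rintro ⟨x, y⟩ h0
    rw [hφapp] at h0
    have hy0 : q3 y = 0 := by
      have hγy : α3 (q3 y) = 0 := by
        rw [← hγφ3]
        have hsum : γ (φ1 x) + γ (φ3 y) = 0 := by
          rw [← map_add]
          show γ (φ1 (x, y).1 + φ3 (x, y).2) = 0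
          rw [h0, map_zero]
        rwa [hγφ1, zero_add] at hsum
      exact α3.injective (by rw [hγy]; exact (map_zero α3).symm)
    have hymem : y ∈ B.range := by
      rw [hq3def, QuotientAddGroup.mk'_apply] at hy0
      exact (QuotientAddGroup.eq_zero_iff _).mp hy0
    obtain ⟨η, hη⟩ := AddMonoidHom.mem_range.mp hymem
    have hxY : φ1 (x - Y η) = 0 := by
      rw [map_sub, hY2, hη, sub_neg_eq_add, h0]
    have hker : α1 (q1 (x - Y η)) ∈ ε.ker := AddMonoidHom.mem_ker.mpr (by rw [← hφ1]; exact hxY)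
    rw [← h4] at hker
    obtain ⟨f3, hf3⟩ := AddMonoidHom.mem_range.mp hker
    set ζ : (B.ker : AddSubgroup (X3' →₀ ℤ)) := β3.symm f3 with hζdef
    have hδζ : δ (β3 ζ) = α1 (q1 (x - Y η)) := by rw [hζdef, β3.apply_symm_apply]; exact hf3
    have hq : q1 (x - Y η - Y ↑ζ) = 0 := by
      rw [map_sub, hY1, hδζ, α1.symm_apply_apply, sub_self]
    have hqmem : x - Y η - Y ↑ζ ∈ A.range := by
      rw [hq1def, QuotientAddGroup.mk'_apply] at hq
      exact (QuotientAddGroup.eq_zero_iff _).mp hq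
    obtain ⟨ξ, hξ⟩ := AddMonoidHom.mem_range.mp hqmem
    refine ⟨(ξ, η + ↑ζ), ?_⟩
    rw [blockC_apply]
    have hBζ : B (↑ζ : X3' →₀ ℤ) = 0 := AddMonoidHom.mem_ker.mp ζ.2
    refine Prod.ext ?_ ?_
    · show A ξ + Y (η + ↑ζ) = x
      rw [map_add, hξ]
      abel
    · show B (η + ↑ζ) = y
      rw [map_add, hBζ, add_zero, hη]
  set ᾱ : (((X1 →₀ ℤ) × (X3 →₀ ℤ)) ⧸ (blockC A B Y).range) →+ G2 :=
    QuotientAddGroup.lift _ φ (fun z hz => by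
      obtain ⟨z', rfl⟩ := AddMonoidHom.mem_range.mp hz
      exact hφC z') with hᾱdef
  have hᾱmk : ∀ z, ᾱ (QuotientAddGroup.mk z) = φ z := fun z => rfl
  have hᾱbij : Function.Bijective ᾱ := by
    constructor
    · intro a b
      refine QuotientAddGroup.induction_on a fun z1 => ?_
      refine QuotientAddGroup.induction_on b fun z2 => ?_
      intro h
      have h12 : φ z1 = φ z2 := h
      have hsub : φ (z1 - z2) = 0 := by rw [map_sub, h12, sub_self]
      exact (QuotientAddGroup.eq_iff_sub_mem).mpr (hφker _ hsub)
    · intro g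
      obtain ⟨z, hz⟩ := hφsurj g
      exact ⟨QuotientAddGroup.mk z, hz⟩
  set α2 : (((X1 →₀ ℤ) × (X3 →₀ ℤ)) ⧸ (blockC A B Y).range) ≃+ G2 :=
    AddEquiv.ofBijective ᾱ hᾱbij with hα2def
  have hα2mk : ∀ z, α2 (QuotientAddGroup.mk z) = φ z := fun z => rfl
  -- normalization
  have hnorm : α2 (QuotientAddGroup.mk (one1, one3)) = g2 := by
    rw [hα2mk, hφapp]
    show φ1 one1 + φ3 one3 = g2
    rw [hφ3one]
    abel
  -- condition (a)
  have hcondA : ∀ x : (X1 →₀ ℤ) ⧸ A.range, α2 (snakeIbar A B Y x) = ε (α1 x) := by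
    intro x
    refine QuotientAddGroup.induction_on x fun x' => ?_
    have e1 : snakeIbar A B Y ((x' : (X1 →₀ ℤ) ⧸ A.range)) =
        QuotientAddGroup.mk ((x', 0) : (X1 →₀ ℤ) × (X3 →₀ ℤ)) :=
      QuotientAddGroup.map_mk _ _ _ _ _
    rw [e1, hα2mk, hφapp]
    show φ1 x' + φ3 0 = ε (α1 ((x' : (X1 →₀ ℤ) ⧸ A.range)))
    rw [map_zero, add_zero, hφ1, hq1def, QuotientAddGroup.mk'_apply]
  -- condition (b)
  have hcondB : ∀ c : ((X1 →₀ ℤ) × (X3 →₀ ℤ)) ⧸ (blockC A B Y).range,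
      α3 (snakePbar A B Y c) = γ (α2 c) := by
    intro c
    refine QuotientAddGroup.induction_on c fun z => ?_
    have e1 : snakePbar A B Y ((z : ((X1 →₀ ℤ) × (X3 →₀ ℤ)) ⧸ (blockC A B Y).range)) =
        ((z.2 : X3 →₀ ℤ) : (X3 →₀ ℤ) ⧸ B.range) :=
      QuotientAddGroup.map_mk _ _ _ _ _
    rw [e1, hα2mk, hφapp, map_add, hγφ1, zero_add, hγφ3, hq3def, QuotientAddGroup.mk'_apply]
  -- condition (e)
  have hcondE : ∀ η : B.ker, α1 (snakeDelta A B Y η) = δ (β3 η) := by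
    intro η
    show α1 (q1 (Y ↑η)) = δ (β3 η)
    rw [hY1, α1.apply_symm_apply]
  -- the submodule K
  set K : Submodule ℤ (X3' →₀ ℤ) :=
    LinearMap.ker B.toIntLinearMap ⊓ LinearMap.ker (q1.comp Y).toIntLinearMap with hKdef
  have hKmem : ∀ η : X3' →₀ ℤ, η ∈ K ↔ (B η = 0 ∧ q1 (Y η) = 0) := by
    intro η
    rw [hKdef, Submodule.mem_inf, LinearMap.mem_ker, LinearMap.mem_ker]
    constructor
    · exact fun h => ⟨h.1, h.2⟩
    · exact fun h => ⟨h.1, h.2⟩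
  haveI hKfree : Module.Free ℤ K := submodule_countable_free K
  -- the section sξ
  obtain ⟨sξ, hsξ0⟩ := addHom_lift (P := K) A (-(Y.comp K.subtype.toAddMonoidHom)) (fun k => by
    have h2k := ((hKmem _).mp k.2).2
    have hmem : Y (↑k : X3' →₀ ℤ) ∈ A.range := by
      rw [hq1def, QuotientAddGroup.mk'_apply] at h2k
      exact (QuotientAddGroup.eq_zero_iff _).mp h2k
    obtain ⟨m, hm⟩ := AddMonoidHom.mem_range.mp hmem
    refine ⟨-m, ?_⟩
    rw [map_neg, hm]
    rfl)
  have hsξ : ∀ k : K, A (sξ k) = -(Y (↑k : X3' →₀ ℤ)) := by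
    intro k
    rw [hsξ0 k]
    rfl
  -- inclusion of K into ker B
  set iK : K →+ B.ker := AddMonoidHom.mk'
    (fun k => ⟨(↑k : X3' →₀ ℤ), AddMonoidHom.mem_ker.mpr ((hKmem _).mp k.2).1⟩)
    (fun a b => Subtype.ext rfl) with hiKdef
  -- the lift t
  obtain ⟨t, ht0⟩ := addHom_lift (P := K) γ' (β3.toAddMonoidHom.comp iK) (fun k => by
    have h2k := ((hKmem _).mp k.2).2
    have hδ0 : δ (β3 (iK k)) = 0 := by
      have hy1 := hY1 (iK k)
      have hcoe : ((iK k : B.ker) : X3' →₀ ℤ) = (↑k : X3' →₀ ℤ) := rfl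
      rw [hcoe, h2k] at hy1
      have := congrArg α1 hy1
      rwa [map_zero, α1.apply_symm_apply, eq_comm] at this
    have hmem : β3 (iK k) ∈ γ'.range := by
      rw [h3, AddMonoidHom.mem_ker]
      exact hδ0
    obtain ⟨f2, hf2⟩ := AddMonoidHom.mem_range.mp hmem
    exact ⟨f2, hf2⟩)
  have ht : ∀ k : K, γ' (t k) = β3 (iK k) := fun k => ht0 k
  -- kernel facts for blockC
  have hkC1 : ∀ p : (blockC A B Y).ker,
      A (↑p : (X1' →₀ ℤ) × (X3' →₀ ℤ)).1 + Y (↑p : (X1' →₀ ℤ) × (X3' →₀ ℤ)).2 = 0 :=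
    fun p => congrArg Prod.fst (AddMonoidHom.mem_ker.mp p.2)
  have hkC2 : ∀ p : (blockC A B Y).ker, B (↑p : (X1' →₀ ℤ) × (X3' →₀ ℤ)).2 = 0 :=
    fun p => congrArg Prod.snd (AddMonoidHom.mem_ker.mp p.2)
  -- the projection κ : ker C → K
  set κ : (blockC A B Y).ker →+ K := AddMonoidHom.mk'
    (fun p => ⟨(↑p : (X1' →₀ ℤ) × (X3' →₀ ℤ)).2, (hKmem _).mpr ⟨hkC2 p, by
      have hY' : Y (↑p : (X1' →₀ ℤ) × (X3' →₀ ℤ)).2 =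
          -(A (↑p : (X1' →₀ ℤ) × (X3' →₀ ℤ)).1) :=
        eq_neg_of_add_eq_zero_right (hkC1 p)
      rw [hY', map_neg, hq1A, neg_zero]⟩⟩)
    (fun a b => Subtype.ext rfl) with hκdef
  -- the map aK : ker C → ker A
  set aK : (blockC A B Y).ker →+ A.ker := AddMonoidHom.mk'
    (fun p => ⟨(↑p : (X1' →₀ ℤ) × (X3' →₀ ℤ)).1 - sξ (κ p), AddMonoidHom.mem_ker.mpr (by
      rw [map_sub, hsξ]
      have hcoe : ((κ p : K) : X3' →₀ ℤ) = (↑p : (X1' →₀ ℤ) × (X3' →₀ ℤ)).2 := rfl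
      rw [hcoe, sub_neg_eq_add]
      exact hkC1 p)⟩)
    (fun a b => Subtype.ext (by
      show ((↑(a + b) : (X1' →₀ ℤ) × (X3' →₀ ℤ)).1 - sξ (κ (a + b))) =
        ((↑a : (X1' →₀ ℤ) × (X3' →₀ ℤ)).1 - sξ (κ a)) +
          ((↑b : (X1' →₀ ℤ) × (X3' →₀ ℤ)).1 - sξ (κ b))
      rw [map_add κ, map_add sξ]
      show ((↑a : (X1' →₀ ℤ) × (X3' →₀ ℤ)).1 + (↑b : (X1' →₀ ℤ) × (X3' →₀ ℤ)).1)
        - (sξ (κ a) + sξ (κ b)) = _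
      abel)) with haKdef
  -- the map β2₀
  set β2₀ : ((blockC A B Y).ker : AddSubgroup ((X1' →₀ ℤ) × (X3' →₀ ℤ))) →+ F2 :=
    (ε'.comp (β1.toAddMonoidHom.comp aK)) + (t.comp κ) with hβ2₀def
  have hβ2app : ∀ p, β2₀ p = ε' (β1 (aK p)) + t (κ p) := fun _ => rfl
  have hγ'β2 : ∀ p, γ' (β2₀ p) = β3 (iK (κ p)) := by
    intro p
    rw [hβ2app, map_add, hγ'ε', zero_add, ht]
  have hβ2inj : Function.Injective β2₀ := by
    rw [injective_iff_map_eq_zero]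
    intro r hr
    have h1r : β3 (iK (κ r)) = 0 := by rw [← hγ'β2, hr, map_zero]
    have h2r : iK (κ r) = 0 := β3.injective (by rw [h1r]; exact (map_zero β3).symm)
    have h3r : (↑r : (X1' →₀ ℤ) × (X3' →₀ ℤ)).2 = 0 := congrArg Subtype.val h2r
    have h4r : κ r = 0 := Subtype.ext h3r
    have h5r : ε' (β1 (aK r)) = 0 := by
      have := hr
      rw [hβ2app, h4r, map_zero, add_zero] at this
      exact this
    have h6r : aK r = 0 := by
      have hz := (injective_iff_map_eq_zero ε').mp hε' _ h5r
      exact β1.injective (by rw [hz]; exact (map_zero β1).symm)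
    have h7r : (↑r : (X1' →₀ ℤ) × (X3' →₀ ℤ)).1 - sξ (κ r) = 0 := congrArg Subtype.val h6r
    rw [h4r, map_zero, sub_zero] at h7r
    exact Subtype.ext (Prod.ext h7r h3r)
  have hβ2surj : Function.Surjective β2₀ := by
    intro f
    set ζ : (B.ker : AddSubgroup (X3' →₀ ℤ)) := β3.symm (γ' f) with hζdef
    have hζK : (↑ζ : X3' →₀ ℤ) ∈ K := by
      refine (hKmem _).mpr ⟨AddMonoidHom.mem_ker.mp ζ.2, ?_⟩
      rw [hY1 ζ, hζdef, β3.apply_symm_apply, hδγ', map_zero]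
    set k : K := ⟨(↑ζ : X3' →₀ ℤ), hζK⟩ with hkdef
    have hiKk : iK k = ζ := Subtype.ext rfl
    have hp0mem : ((sξ k, (↑k : X3' →₀ ℤ)) : (X1' →₀ ℤ) × (X3' →₀ ℤ)) ∈ (blockC A B Y).ker := by
      rw [AddMonoidHom.mem_ker, blockC_apply, hsξ]
      have hBk : B (↑k : X3' →₀ ℤ) = 0 := ((hKmem _).mp k.2).1
      rw [hBk]
      refine Prod.ext ?_ rfl
      show -(Y (↑k : X3' →₀ ℤ)) + Y (↑k : X3' →₀ ℤ) = 0
      abel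
    set p0 : ((blockC A B Y).ker : AddSubgroup ((X1' →₀ ℤ) × (X3' →₀ ℤ))) := ⟨_, hp0mem⟩
      with hp0def
    have hκp0 : κ p0 = k := Subtype.ext rfl
    have haKp0 : aK p0 = 0 := Subtype.ext (by
      show sξ k - sξ (κ p0) = 0
      rw [hκp0, sub_self])
    have hβp0 : β2₀ p0 = t k := by rw [hβ2app, haKp0, map_zero, map_zero, zero_add, hκp0]
    have hγtk : γ' (t k) = γ' f := by rw [ht, hiKk, hζdef, β3.apply_symm_apply]
    have hmem2 : f - t k ∈ ε'.range := by
      rw [h2, AddMonoidHom.mem_ker, map_sub, hγtk, sub_self]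
    obtain ⟨f1, hf1⟩ := AddMonoidHom.mem_range.mp hmem2
    set ξ0 : (A.ker : AddSubgroup (X1' →₀ ℤ)) := β1.symm f1 with hξ0def
    have he0mem : (((↑ξ0 : X1' →₀ ℤ), 0) : (X1' →₀ ℤ) × (X3' →₀ ℤ)) ∈ (blockC A B Y).ker := by
      rw [AddMonoidHom.mem_ker, blockC_apply]
      rw [AddMonoidHom.mem_ker.mp ξ0.2, map_zero, map_zero, add_zero]
      rfl
    set e0 : ((blockC A B Y).ker : AddSubgroup ((X1' →₀ ℤ) × (X3' →₀ ℤ))) := ⟨_, he0mem⟩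
      with he0def
    have hκe0 : κ e0 = 0 := Subtype.ext rfl
    have haKe0 : aK e0 = ξ0 := Subtype.ext (by
      show (↑ξ0 : X1' →₀ ℤ) - sξ (κ e0) = (↑ξ0 : X1' →₀ ℤ)
      rw [hκe0, map_zero, sub_zero])
    refine ⟨p0 + e0, ?_⟩
    rw [map_add, hβp0, hβ2app, haKe0, hκe0, map_zero, add_zero, hξ0def,
      β1.apply_symm_apply, hf1]
    abel
  set β2 : ((blockC A B Y).ker : AddSubgroup ((X1' →₀ ℤ) × (X3' →₀ ℤ))) ≃+ F2 :=
    AddEquiv.ofBijective β2₀ ⟨hβ2inj, hβ2surj⟩ with hβ2def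
  have hβ2 : ∀ p, β2 p = β2₀ p := fun _ => rfl
  -- condition (c)
  have hcondC : ∀ ξ : A.ker, β2 (snakeI' A B Y ξ) = ε' (β1 ξ) := by
    intro ξ
    rw [hβ2, hβ2app]
    have hκs : κ (snakeI' A B Y ξ) = 0 := Subtype.ext rfl
    have haKs : aK (snakeI' A B Y ξ) = ξ := Subtype.ext (by
      show (↑ξ : X1' →₀ ℤ) - sξ (κ (snakeI' A B Y ξ)) = (↑ξ : X1' →₀ ℤ)
      rw [hκs, map_zero, sub_zero])
    rw [hκs, haKs, map_zero, add_zero]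
  -- condition (d)
  have hcondD : ∀ p : (blockC A B Y).ker, γ' (β2 p) = β3 (snakeP' A B Y p) := by
    intro p
    rw [hβ2, hγ'β2]
    congr 1
  exact ⟨Y, α2, β2, hnorm, hcondA, hcondB, hcondC, hcondD, hcondE⟩
end

section
/- Let (ε : G1 → G2, γ : G2 → G3, ε' : F1 → F2, γ' : F2 → F3, δ : F3 → G1) be a cyclic six-term exact sequence of abelian groups with F1, F2, F3 free abelian and F3 = 0, let A : ℤ^{X1'} → ℤ^{X1} and B : ℤ^{X3'} → ℤ^{X3} be homomorphisms where X1 and X3 are finite index sets, and suppose given isomorphisms α1 : coker A → G1, β1 : ker A → F1, α3 : coker B → G3, β3 : ker B → F3. Suppose there is a homomorphism σ : G3 → G2 with γ ∘ σ = id. Let g2 ∈ G2, set g3 = γ(g2), and let g1 ∈ G1 be the unique element with ε(g1) = g2 − σ(g3). If α1([𝟙_{X1}]) = g1 and α3([𝟙_{X3}]) = g3 (𝟙 denoting all-ones vectors), then there exist isomorphisms α2 : coker C → G2 and β2 : ker C → F2, where C = (A 0; 0 B) is the block matrix with Y = 0, satisfying the five commutativity conditions (a) α2 ∘ Ī = ε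 ∘ α1, (b) α3 ∘ P̄ = γ ∘ α2, (c) β2 ∘ I' = ε' ∘ β1, (d) γ' ∘ β2 = β3 ∘ P', (e) α1 ∘ [0] = δ ∘ β3, and moreover α2([𝟙]) = g2, where 𝟙 ∈ ℤ^{X1} ⊕ ℤ^{X3} is the all-ones vector. -/
/-- In the situation of Statement 8, with `X1, X3` finite and `F3 = 0`,
suppose `σ : G3 → G2` splits `γ`, `g2 ∈ G2`, `g3 = γ(g2)`, and `g1` is the (unique) element
of `G1` with `ε(g1) = g2 - σ(g3)`.  If `α1([𝟙_{X1}]) = g1` and `α3([𝟙_{X3}]) = g3`, then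
there are isomorphisms `α2 : coker C ≅ G2`, `β2 : ker C ≅ F2` for `C = (A 0; 0 B)` (i.e.
`Y = 0`) satisfying the five commutativity conditions with `α2([𝟙]) = g2`. -/
theorem stmt13 {X1 X1' X3 X3' : Type}
    [Fintype X1] [Fintype X3] [Countable X1'] [Countable X3']
    (G1 G2 G3 F1 F2 F3 : Type)
    [AddCommGroup G1] [AddCommGroup G2] [AddCommGroup G3]
    [AddCommGroup F1] [AddCommGroup F2] [AddCommGroup F3]
    [Module.Free ℤ F1] [Module.Free ℤ F2] [Module.Free ℤ F3]
    [Subsingleton F3]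
    (ε : G1 →+ G2) (γ : G2 →+ G3) (ε' : F1 →+ F2) (γ' : F2 →+ F3) (δ : F3 →+ G1)
    (hγ : Function.Surjective γ) (hε' : Function.Injective ε')
    (h1 : ε.range = γ.ker) (h2 : ε'.range = γ'.ker)
    (h3 : γ'.range = δ.ker) (h4 : δ.range = ε.ker)
    (A : (X1' →₀ ℤ) →+ (X1 →₀ ℤ)) (B : (X3' →₀ ℤ) →+ (X3 →₀ ℤ))
    (α1 : ((X1 →₀ ℤ) ⧸ A.range) ≃+ G1) (β1 : A.ker ≃+ F1)
    (α3 : ((X3 →₀ ℤ) ⧸ B.range) ≃+ G3) (β3 : B.ker ≃+ F3)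
    (σ : G3 →+ G2) (hσ : ∀ x : G3, γ (σ x) = x)
    (g2 : G2) (g1 : G1)
    (hg1 : ε g1 = g2 - σ (γ g2))
    (hα1 : α1 (QuotientAddGroup.mk
        (Finsupp.equivFunOnFinite.symm fun _ : X1 => (1 : ℤ))) = g1)
    (hα3 : α3 (QuotientAddGroup.mk
        (Finsupp.equivFunOnFinite.symm fun _ : X3 => (1 : ℤ))) = γ g2) :
    ∃ (α2 : (((X1 →₀ ℤ) × (X3 →₀ ℤ)) ⧸ (blockC A B 0).range) ≃+ G2)
      (β2 : (blockC A B 0).ker ≃+ F2),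
      (α2 (QuotientAddGroup.mk
          ((Finsupp.equivFunOnFinite.symm fun _ : X1 => (1 : ℤ)),
            (Finsupp.equivFunOnFinite.symm fun _ : X3 => (1 : ℤ)))) = g2) ∧
      (∀ x : (X1 →₀ ℤ) ⧸ A.range, α2 (snakeIbar A B 0 x) = ε (α1 x)) ∧
      (∀ c : ((X1 →₀ ℤ) × (X3 →₀ ℤ)) ⧸ (blockC A B 0).range,
        α3 (snakePbar A B 0 c) = γ (α2 c)) ∧
      (∀ ξ : A.ker, β2 (snakeI' A B 0 ξ) = ε' (β1 ξ)) ∧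
      (∀ p : (blockC A B 0).ker, γ' (β2 p) = β3 (snakeP' A B 0 p)) ∧
      (∀ η : B.ker, α1 (snakeDelta A B 0 η) = δ (β3 η)) := by
  -- basic consequences of F3 being trivial
  have hδ0 : ∀ x : F3, δ x = 0 := fun x => by rw [Subsingleton.elim x 0, map_zero]
  have hεinj : Function.Injective ε := by
    rw [injective_iff_map_eq_zero]
    intro a ha
    have hmem : a ∈ ε.ker := ha
    rw [← h4] at hmem
    obtain ⟨x, rfl⟩ := hmem
    exact hδ0 x
  have hγε : ∀ a, γ (ε a) = 0 := fun a => by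
    have : ε a ∈ γ.ker := h1 ▸ ⟨a, rfl⟩
    exact this
  have hε'surj : Function.Surjective ε' := by
    intro y
    have : y ∈ γ'.ker := by
      rw [AddMonoidHom.mem_ker]; exact Subsingleton.elim _ _
    rw [← h2] at this; exact this
  have hBker : ∀ η : B.ker, (η : X3' →₀ ℤ) = 0 := by
    intro η
    have h0 : η = 0 := β3.injective (Subsingleton.elim _ _)
    rw [h0]; rfl
  -- first components of kernel elements lie in ker A
  have hker1 : ∀ p : (blockC A B 0).ker, A (p : (X1' →₀ ℤ) × (X3' →₀ ℤ)).1 = 0 := by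
    intro p
    have h := p.2
    rw [AddMonoidHom.mem_ker] at h
    have := congrArg Prod.fst h
    simpa [blockC] using this
  -- the map f : ℤ^{X1} × ℤ^{X3} → G2
  set f : ((X1 →₀ ℤ) × (X3 →₀ ℤ)) →+ G2 :=
    (ε.comp (α1.toAddMonoidHom.comp ((QuotientAddGroup.mk' A.range).comp
      (AddMonoidHom.fst _ _)))) +
    (σ.comp (α3.toAddMonoidHom.comp ((QuotientAddGroup.mk' B.range).comp
      (AddMonoidHom.snd _ _)))) with hfdef
  have hfapp : ∀ x y, f (x, y) = ε (α1 (QuotientAddGroup.mk x)) +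
      σ (α3 (QuotientAddGroup.mk y)) := fun x y => rfl
  have hcond : ∀ q ∈ (blockC A B 0).range, f q = 0 := by
    rintro q ⟨⟨ξ, η⟩, rfl⟩
    have hx : (QuotientAddGroup.mk (A ξ) : (X1 →₀ ℤ) ⧸ A.range) = 0 :=
      (QuotientAddGroup.eq_zero_iff _).mpr ⟨ξ, rfl⟩
    have hy : (QuotientAddGroup.mk (B η) : (X3 →₀ ℤ) ⧸ B.range) = 0 :=
      (QuotientAddGroup.eq_zero_iff _).mpr ⟨η, rfl⟩
    have : blockC A B 0 (ξ, η) = (A ξ, B η) := by simp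
    rw [this, hfapp, hx, hy, map_zero, map_zero, map_zero, map_zero, add_zero]
  set φ : (((X1 →₀ ℤ) × (X3 →₀ ℤ)) ⧸ (blockC A B 0).range) →+ G2 :=
    QuotientAddGroup.lift _ f hcond with hφdef
  have hφapp : ∀ x y, φ (QuotientAddGroup.mk (x, y)) =
      ε (α1 (QuotientAddGroup.mk x)) + σ (α3 (QuotientAddGroup.mk y)) :=
    fun x y => rfl
  have hφinj : Function.Injective φ := by
    rw [injective_iff_map_eq_zero]
    intro q hq
    induction q using QuotientAddGroup.induction_on with
    | H p =>
      obtain ⟨x, y⟩ := p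
      rw [hφapp] at hq
      have hy0 : α3 (QuotientAddGroup.mk y) = 0 := by
        have := congrArg γ hq
        rw [map_add, hγε, hσ, zero_add, map_zero] at this
        exact this
      have hy : (QuotientAddGroup.mk y : (X3 →₀ ℤ) ⧸ B.range) = 0 :=
        α3.injective (by rw [hy0, map_zero])
      rw [hy0, map_zero, add_zero] at hq
      have hx0 : α1 (QuotientAddGroup.mk x) = 0 := hεinj (by rw [hq, map_zero])
      have hx : (QuotientAddGroup.mk x : (X1 →₀ ℤ) ⧸ A.range) = 0 :=
        α1.injective (by rw [hx0, map_zero])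
      obtain ⟨ξ, hξ⟩ := (QuotientAddGroup.eq_zero_iff _).mp hx
      obtain ⟨η, hη⟩ := (QuotientAddGroup.eq_zero_iff _).mp hy
      refine (QuotientAddGroup.eq_zero_iff _).mpr ⟨(ξ, η), ?_⟩
      simp [hξ, hη]
  have hφsurj : Function.Surjective φ := by
    intro g
    have hmem : g - σ (γ g) ∈ γ.ker := by
      rw [AddMonoidHom.mem_ker, map_sub, hσ, sub_self]
    rw [← h1] at hmem
    obtain ⟨a, ha⟩ := hmem
    obtain ⟨x, hx⟩ := QuotientAddGroup.mk_surjective (α1.symm a)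
    obtain ⟨y, hy⟩ := QuotientAddGroup.mk_surjective (α3.symm (γ g))
    refine ⟨QuotientAddGroup.mk (x, y), ?_⟩
    rw [hφapp, hx, hy, α1.apply_symm_apply, α3.apply_symm_apply, ha]
    abel
  set α2 : (((X1 →₀ ℤ) × (X3 →₀ ℤ)) ⧸ (blockC A B 0).range) ≃+ G2 :=
    AddEquiv.ofBijective φ ⟨hφinj, hφsurj⟩ with hα2def
  have hα2app : ∀ q, α2 q = φ q := fun q => rfl
  -- β2
  set ψ : (blockC A B 0).ker →+ F2 :=
    AddMonoidHom.mk' (fun p => ε' (β1 ⟨(p : (X1' →₀ ℤ) × (X3' →₀ ℤ)).1, hker1 p⟩))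
      (fun a b => by
        rw [← ε'.map_add, ← β1.map_add]
        exact congrArg (fun z => ε' (β1 z)) (Subtype.ext rfl)) with hψdef
  have hψinj : Function.Injective ψ := by
    intro p q hpq
    have h1' : (p : (X1' →₀ ℤ) × (X3' →₀ ℤ)).1 = (q : (X1' →₀ ℤ) × (X3' →₀ ℤ)).1 := by
      have := β1.injective (hε' hpq)
      exact congrArg Subtype.val this
    have h2p : (p : (X1' →₀ ℤ) × (X3' →₀ ℤ)).2 = 0 := by
      have hB : B (p : (X1' →₀ ℤ) × (X3' →₀ ℤ)).2 = 0 := by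
        have h := p.2
        rw [AddMonoidHom.mem_ker] at h
        have := congrArg Prod.snd h
        exact this
      exact hBker ⟨_, hB⟩
    have h2q : (q : (X1' →₀ ℤ) × (X3' →₀ ℤ)).2 = 0 := by
      have hB : B (q : (X1' →₀ ℤ) × (X3' →₀ ℤ)).2 = 0 := by
        have h := q.2
        rw [AddMonoidHom.mem_ker] at h
        have := congrArg Prod.snd h
        exact this
      exact hBker ⟨_, hB⟩
    exact Subtype.ext (Prod.ext h1' (h2p.trans h2q.symm))
  have hψsurj : Function.Surjective ψ := by
    intro y
    obtain ⟨z, hz⟩ := hε'surj y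
    obtain ⟨ξ, hξ⟩ := β1.surjective z
    refine ⟨⟨((ξ : X1' →₀ ℤ), 0), ?_⟩, ?_⟩
    · rw [AddMonoidHom.mem_ker]
      have : A (ξ : X1' →₀ ℤ) = 0 := ξ.2
      simp [this]
    · show ε' (β1 ⟨(ξ : X1' →₀ ℤ), _⟩) = y
      rw [show (⟨(ξ : X1' →₀ ℤ), _⟩ : A.ker) = ξ from Subtype.ext rfl, hξ, hz]
  set β2 : (blockC A B 0).ker ≃+ F2 := AddEquiv.ofBijective ψ ⟨hψinj, hψsurj⟩ with hβ2def
  refine ⟨α2, β2, ?_, ?_, ?_, ?_, ?_, ?_⟩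
  · rw [hα2app, hφapp, hα1, hα3, hg1]
    abel
  · intro x
    induction x using QuotientAddGroup.induction_on with
    | H z =>
      have : snakeIbar A B 0 (QuotientAddGroup.mk z) =
          QuotientAddGroup.mk (z, (0 : X3 →₀ ℤ)) := rfl
      rw [this, hα2app, hφapp]
      simp
  · intro c
    induction c using QuotientAddGroup.induction_on with
    | H p =>
      obtain ⟨x, y⟩ := p
      have : snakePbar A B 0 (QuotientAddGroup.mk ((x, y) : (X1 →₀ ℤ) × (X3 →₀ ℤ))) =
          QuotientAddGroup.mk y := rfl
      rw [this, hα2app, hφapp, map_add, hγε, hσ, zero_add]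
  · intro ξ
    show ψ (snakeI' A B 0 ξ) = ε' (β1 ξ)
    exact congrArg (fun z => ε' (β1 z)) (Subtype.ext rfl)
  · intro p
    exact Subsingleton.elim _ _
  · intro η
    have hs : snakeDelta A B 0 η = 0 := by
      show (QuotientAddGroup.mk' A.range) ((0 : (X3' →₀ ℤ) →+ (X1 →₀ ℤ)) (η : X3' →₀ ℤ)) = 0
      simp
    rw [hs, map_zero, Subsingleton.elim (β3 η) 0, map_zero]
end

section
/- If a graph E = (E⁰, E¹, r, s) is left adhesive, then for every vertex v ∈ E⁰ there exists ξ ∈ ℤ^{E⁰_reg} such that every coordinate of (R_E − I)ξ − δ_v is nonnegative, where R_E − I denotes the map ℤ^{E⁰_reg} → ℤ^{E⁰}, ξ ↦ R_E ξ − I ξ. -/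
open scoped Classical

/-- A vertex `v` of the graph with source map `s` is *regular* if `s⁻¹(v)` is nonempty
and finite. -/
def RegularVx {V E : Type} (s : E → V) (v : V) : Prop :=
  {e : E | s e = v}.Nonempty ∧ {e : E | s e = v}.Finite

/-- `ecount r s w v` is the number of edges with source `w` and range `v`, i.e. the
`(v, w)` entry `R_E(v, w)` of the regular vertex matrix (when `w` is regular). -/
noncomputable def ecount {V E : Type} (r s : E → V) (w v : V) : ℕ :=
  Nat.card {e : E // s e = w ∧ r e = v}

/-- A graph is *left adhesive* if for every vertex `v₀` there are finitely many pairwise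
distinct edges `e₀, e₁, …, e_n` such that, with `V := {r(e_k) : k = 1, …, n}`, one has
`r(e₀) = v₀`, `s(e_k) ∈ V` for all `k = 0, …, n`, and `V` consists of regular vertices. -/
def LeftAdhesive {V E : Type} (r s : E → V) : Prop :=
  ∀ v₀ : V, ∃ (n : ℕ) (e : Fin (n + 1) → E),
    Function.Injective e ∧
    r (e 0) = v₀ ∧
    (∀ k, ∃ i : Fin (n + 1), i ≠ 0 ∧ r (e i) = s (e k)) ∧
    (∀ i : Fin (n + 1), i ≠ 0 → RegularVx s (r (e i)))

/-- A graph is *right adhesive* if one can choose, for each regular vertex `v₀`, finitely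
many pairwise distinct edges `e₀, e₁, …, e_n` such that, with
`W_{v₀} := {r(e_k) : k = 1, …, n}`, one has `s(e₀) = v₀` and `r(e_k) ∈ W_{v₀}` for all
`k = 0, …, n`, and for every vertex `w` the set `{v₀ regular : w ∈ W_{v₀}}` is finite. -/
def RightAdhesive {V E : Type} (r s : E → V) : Prop :=
  ∃ (n : {v : V // RegularVx s v} → ℕ)
    (e : ∀ v₀ : {v : V // RegularVx s v}, Fin (n v₀ + 1) → E),
    (∀ v₀, Function.Injective (e v₀)) ∧
    (∀ v₀, s (e v₀ 0) = v₀.1) ∧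
    (∀ v₀ k, ∃ i, i ≠ 0 ∧ r (e v₀ i) = r (e v₀ k)) ∧
    (∀ w : V, {v₀ : {v : V // RegularVx s v} |
        ∃ i, i ≠ 0 ∧ r (e v₀ i) = w}.Finite)

/-- If a graph `E = (E⁰, E¹, r, s)` is left adhesive, then for every
vertex `v` there is `ξ ∈ ℤ^{E⁰_reg}` such that every coordinate of `(R_E − I)ξ − δ_v` is
nonnegative; the `u`-coordinate of `(R_E − I)ξ` is
`Σ_w ξ(w)·(R_E(u, w) − [w = u])`, a finite sum over the support of `ξ`. -/
theorem stmt14 {V E : Type} [Countable V] [Countable E] (r s : E → V)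
    (h : LeftAdhesive r s) (v : V) :
    ∃ ξ : {w : V // RegularVx s w} →₀ ℤ,
      ∀ u : V,
        (if u = v then (1 : ℤ) else 0) ≤
          ξ.sum fun w c => c * ((ecount r s w.1 u : ℤ) - if w.1 = u then 1 else 0) := by
  classical
  obtain ⟨n, e, hinj, he0, hs, hreg⟩ := h v
  set f : {i : Fin (n + 1) // i ≠ 0} → {w : V // RegularVx s w} :=
    fun i => ⟨r (e i.1), hreg i.1 i.2⟩ with hf
  set S : Finset {w : V // RegularVx s w} := Finset.univ.image f with hS
  refine ⟨∑ w ∈ S, Finsupp.single w (1 : ℤ), fun u => ?_⟩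
  set g : {w : V // RegularVx s w} → ℤ → ℤ :=
    fun w c => c * ((ecount r s w.1 u : ℤ) - if w.1 = u then 1 else 0) with hg
  have hsum : (∑ w ∈ S, Finsupp.single w (1 : ℤ)).sum g = ∑ w ∈ S, g w 1 := by
    rw [← Finsupp.sum_finsetSum_index (h := g) (fun a => zero_mul _) (fun a b₁ b₂ => add_mul _ _ _)]
    exact Finset.sum_congr rfl fun w _ => Finsupp.sum_single_index (zero_mul _)
  rw [hsum]
  have hg1 : ∀ w, g w 1 = (ecount r s w.1 u : ℤ) - if w.1 = u then 1 else 0 := by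
    intro w; simp [hg]
  simp only [hg1, Finset.sum_sub_distrib]
  -- the subtracted sum is the cardinality of the filter
  have hboole : (∑ w ∈ S, (if w.1 = u then (1 : ℤ) else 0)) =
      ((S.filter fun w => w.1 = u).card : ℤ) := by
    rw [Finset.sum_boole]
  set c : ℕ := (S.filter fun w => w.1 = u).card with hc
  set Ku : Finset (Fin (n + 1)) := Finset.univ.filter fun k => r (e k) = u with hKu
  -- c ≤ 1
  have hc1 : c ≤ 1 := by
    apply Finset.card_le_one.2
    intro a ha b hb
    simp only [Finset.mem_filter] at ha hb
    exact Subtype.ext (ha.2.trans hb.2.symm)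
  -- if the filter is nonempty, there is i ≠ 0 with r (e i) = u
  have hmem : ∀ w ∈ S, ∃ i : Fin (n + 1), i ≠ 0 ∧ r (e i) = w.1 := by
    intro w hw
    rw [hS, Finset.mem_image] at hw
    obtain ⟨i, _, hi⟩ := hw
    exact ⟨i.1, i.2, by rw [← hi]⟩
  -- claim B : [u = v] + c ≤ Ku.card
  have hB : (if u = v then 1 else 0) + c ≤ Ku.card := by
    by_cases huv : u = v
    · by_cases hne : ((S.filter fun w => w.1 = u)).Nonempty
      · obtain ⟨w, hw⟩ := hne
        rw [Finset.mem_filter] at hw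
        obtain ⟨i, hi0, hir⟩ := hmem w hw.1
        have h2 : ({0, i} : Finset (Fin (n + 1))) ⊆ Ku := by
          intro k hk
          simp only [Finset.mem_insert, Finset.mem_singleton] at hk
          rcases hk with rfl | rfl
          · simp [hKu, he0, huv]
          · simp [hKu, hir, hw.2]
        have := Finset.card_le_card h2
        rw [Finset.card_insert_of_notMem (by simp [Ne.symm hi0]), Finset.card_singleton] at this
        simp only [huv, if_pos]
        omega
      · have : c = 0 := by
          rw [hc, Finset.card_eq_zero, ← Finset.not_nonempty_iff_eq_empty]
          exact hne
        have h0 : (0 : Fin (n + 1)) ∈ Ku := by simp [hKu, he0, huv]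
        have := Finset.card_pos.2 ⟨0, h0⟩
        simp only [huv, if_pos]
        omega
    · by_cases hne : ((S.filter fun w => w.1 = u)).Nonempty
      · obtain ⟨w, hw⟩ := hne
        rw [Finset.mem_filter] at hw
        obtain ⟨i, hi0, hir⟩ := hmem w hw.1
        have hiK : i ∈ Ku := by simp [hKu, hir, hw.2]
        have := Finset.card_pos.2 ⟨i, hiK⟩
        simp only [huv, if_neg, not_false_iff]
        omega
      · have : c = 0 := by
          rw [hc, Finset.card_eq_zero, ← Finset.not_nonempty_iff_eq_empty]
          exact hne
        simp only [huv, if_neg, not_false_iff]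
        omega
  -- claim A : Ku.card ≤ ∑ ecount
  have hA : Ku.card ≤ ∑ w ∈ S, ecount r s w.1 u := by
    -- classify elements of Ku by the source of their edge
    have hch : ∀ k : Fin (n + 1), ∃ i : Fin (n + 1), i ≠ 0 ∧ r (e i) = s (e k) := hs
    set φ : Fin (n + 1) → {w : V // RegularVx s w} :=
      fun k => ⟨r (e (hch k).choose), hreg _ (hch k).choose_spec.1⟩ with hφ
    have hφ1 : ∀ k, (φ k).1 = s (e k) := fun k => (hch k).choose_spec.2
    have hφS : ∀ k ∈ Ku, φ k ∈ S := by
      intro k _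
      rw [hS, Finset.mem_image]
      exact ⟨⟨(hch k).choose, (hch k).choose_spec.1⟩, Finset.mem_univ _, rfl⟩
    rw [Finset.card_eq_sum_card_fiberwise hφS]
    apply Finset.sum_le_sum
    intro w _
    -- (Ku.filter fun k => φ k = w).card ≤ ecount r s w.1 u
    have hfin : {a : E | s a = w.1}.Finite := w.2.2
    have hfin2 : {a : E | s a = w.1 ∧ r a = u}.Finite :=
      hfin.subset fun a ha => ha.1
    have hec : ecount r s w.1 u = hfin2.toFinset.card := by
      rw [ecount, ← Set.ncard_coe_finset, Set.Finite.coe_toFinset,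
        ← Nat.card_coe_set_eq]
      rfl
    rw [hec]
    apply Finset.card_le_card_of_injOn e
    · intro k hk
      simp only [Finset.coe_filter, Set.mem_setOf_eq, Finset.mem_filter, hKu, Finset.mem_univ, true_and] at hk
      rw [Finset.mem_coe, Set.Finite.mem_toFinset]
      refine ⟨?_, hk.1⟩
      rw [← hφ1 k, hk.2]
    · exact fun a _ b _ hab => hinj hab
  -- conclude
  rw [hboole]
  have hcast : (∑ w ∈ S, (ecount r s w.1 u : ℤ)) = ((∑ w ∈ S, ecount r s w.1 u : ℕ) : ℤ) := by
    push_cast; ring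
  rw [hcast]
  have hB' : (if u = v then (1 : ℤ) else 0) + (c : ℤ) ≤ (Ku.card : ℤ) := by
    by_cases huv : u = v <;> simp only [huv, if_pos, if_neg, not_false_iff] at hB ⊢ <;>
      exact_mod_cast hB
  have hA' : (Ku.card : ℤ) ≤ ((∑ w ∈ S, ecount r s w.1 u : ℕ) : ℤ) := by exact_mod_cast hA
  linarith
end

section
/- Let E = (E⁰, E¹, r, s) be a graph. If either (ℓ1) every vertex of E is regular and every vertex of E is the base of at least two distinct loops, or (ℓ2) for every v₀ ∈ E⁰ there exist edges e₁, …, e_n ∈ E¹ forming a cycle with s(e_k) regular for each k = 1, …, n, together with an edge e₀ ∈ E¹ with e₀ ≠ e₁, s(e₀) = s(e₁) and r(e₀) = v₀, then E is left adhesive. -/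
open scoped Classical

lemma key {V E : Type} (r s : E → V) (v₀ : V) (e₀ : E) (S : Finset E)
    (hne : S.Nonempty) (h₀ : e₀ ∉ S) (hr : r e₀ = v₀)
    (hs0 : ∃ u ∈ S, r u = s e₀)
    (hsS : ∀ t ∈ S, ∃ u ∈ S, r u = s t)
    (hreg : ∀ u ∈ S, RegularVx s (r u)) :
    ∃ (n : ℕ) (e : Fin (n + 1) → E), Function.Injective e ∧ r (e 0) = v₀ ∧
      (∀ k, ∃ i : Fin (n + 1), i ≠ 0 ∧ r (e i) = s (e k)) ∧
      (∀ i : Fin (n + 1), i ≠ 0 → RegularVx s (r (e i))) := by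
  classical
  set g : Fin S.card → E := fun i => (S.equivFin.symm i : E) with hg
  have hgmem : ∀ i, g i ∈ S := fun i => (S.equivFin.symm i).2
  have hginj : Function.Injective g := fun a b hab =>
    S.equivFin.symm.injective (Subtype.coe_injective hab)
  have hgsurj : ∀ u ∈ S, ∃ i, g i = u := fun u hu =>
    ⟨S.equivFin ⟨u, hu⟩, by simp [hg]⟩
  have hcard : 1 ≤ S.card := Finset.card_pos.mpr hne
  obtain ⟨n, hn⟩ : ∃ n, S.card = n + 1 := ⟨S.card - 1, (Nat.succ_pred_eq_of_pos hcard).symm⟩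
  refine ⟨S.card, Fin.cases e₀ g, ?_, ?_, ?_, ?_⟩
  · intro a b hab
    induction a using Fin.cases with
    | zero =>
      induction b using Fin.cases with
      | zero => rfl
      | succ j => simp only [Fin.cases_zero, Fin.cases_succ] at hab
                  exact absurd (hab ▸ hgmem j) h₀
    | succ i =>
      induction b using Fin.cases with
      | zero => simp only [Fin.cases_zero, Fin.cases_succ] at hab
                exact absurd (hab ▸ hgmem i) h₀
      | succ j => simp only [Fin.cases_succ] at hab
                  exact congrArg Fin.succ (hginj hab)
  · simpa using hr
  · intro k
    induction k using Fin.cases with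
    | zero =>
      obtain ⟨u, hu, hru⟩ := hs0
      obtain ⟨i, hi⟩ := hgsurj u hu
      exact ⟨i.succ, Fin.succ_ne_zero i, by simpa [hi, hru]⟩
    | succ j =>
      obtain ⟨u, hu, hru⟩ := hsS (g j) (hgmem j)
      obtain ⟨i, hi⟩ := hgsurj u hu
      exact ⟨i.succ, Fin.succ_ne_zero i, by simpa [hi, hru]⟩
  · intro i hi
    induction i using Fin.cases with
    | zero => exact absurd rfl hi
    | succ j => simpa using hreg (g j) (hgmem j)

lemma trunc {V E : Type} (r s : E → V) (e₀ : E) :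
    ∀ (m : ℕ) (c : Fin (m+1) → E),
      (∀ i : Fin m, r (c i.castSucc) = s (c i.succ)) →
      r (c (Fin.last m)) = s (c 0) →
      (∀ i, RegularVx s (s (c i))) →
      e₀ ≠ c 0 → s e₀ = s (c 0) →
      ∃ (m' : ℕ) (c' : Fin (m'+1) → E),
        (∀ i : Fin m', r (c' i.castSucc) = s (c' i.succ)) ∧
        r (c' (Fin.last m')) = s (c' 0) ∧
        (∀ i, RegularVx s (s (c' i))) ∧
        s (c' 0) = s (c 0) ∧ ∀ i, c' i ≠ e₀ := by
  intro m
  induction m using Nat.strong_induction_on with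
  | _ m ih =>
    intro c hchain hclose hreg hne hs
    by_cases hall : ∀ i, c i ≠ e₀
    · exact ⟨m, c, hchain, hclose, hreg, rfl, hall⟩
    · push_neg at hall
      obtain ⟨j, hj⟩ := hall
      have hj0 : j ≠ 0 := by
        rintro rfl; exact hne hj.symm
      set k := j.val with hk
      have hk1 : 1 ≤ k := Nat.one_le_iff_ne_zero.mpr (by
        intro h0; exact hj0 (Fin.ext h0))
      have hkm : k ≤ m := Nat.lt_succ_iff.mp j.isLt
      have hm1 : 1 ≤ m := le_trans hk1 hkm
      -- the truncated cycle of length k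
      set c'' : Fin (k - 1 + 1) → E := fun i =>
        c ⟨i.val, Nat.lt_succ_of_le (le_trans (Nat.le_of_lt_succ i.isLt)
          (le_trans (Nat.sub_le k 1) hkm))⟩ with hc''
      have h0'' : c'' 0 = c 0 := rfl
      have hchain'' : ∀ i : Fin (k - 1), r (c'' i.castSucc) = s (c'' i.succ) := by
        intro i
        have hilt : i.val < m := lt_of_lt_of_le (lt_of_lt_of_le i.isLt (Nat.sub_le k 1)) hkm
        exact hchain ⟨i.val, hilt⟩
      have hclose'' : r (c'' (Fin.last (k - 1))) = s (c'' 0) := by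
        have hkm' : k - 1 < m := lt_of_lt_of_le (Nat.sub_lt hk1 one_pos) hkm
        have h1 : r (c'' (Fin.last (k - 1))) = s (c ⟨k - 1 + 1, Nat.succ_lt_succ hkm'⟩) :=
          hchain ⟨k - 1, hkm'⟩
        have h2 : (⟨k - 1 + 1, Nat.succ_lt_succ hkm'⟩ : Fin (m+1)) = j := by
          ext; exact Nat.succ_pred_eq_of_pos hk1
        rw [h1, h2, hj, hs, h0'']
      have hreg'' : ∀ i, RegularVx s (s (c'' i)) := fun i => hreg _
      have hne'' : e₀ ≠ c'' 0 := by rw [h0'']; exact hne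
      have hs'' : s e₀ = s (c'' 0) := by rw [h0'']; exact hs
      obtain ⟨m', c', a1, a2, a3, a4, a5⟩ :=
        ih (k - 1) (lt_of_lt_of_le (Nat.sub_lt hk1 one_pos) hkm) c'' hchain'' hclose'' hreg'' hne'' hs''
      exact ⟨m', c', a1, a2, a3, by rw [a4, h0''], a5⟩

/-- If either (ℓ1) every vertex of `E` is regular and supports at least
two distinct loops, or (ℓ2) for every `v₀ ∈ E⁰` there is a cycle `e₁, …, e_n` with every
`s(e_k)` regular, together with an edge `e₀ ≠ e₁` with `s(e₀) = s(e₁)` and `r(e₀) = v₀`,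
then `E` is left adhesive. -/
theorem stmt16 {V E : Type} [Countable V] [Countable E] (r s : E → V)
    (h :
      (∀ v : V, RegularVx s v ∧
        ∃ e₁ e₂ : E, e₁ ≠ e₂ ∧ s e₁ = v ∧ r e₁ = v ∧ s e₂ = v ∧ r e₂ = v) ∨
      (∀ v₀ : V, ∃ (m : ℕ) (c : Fin (m + 1) → E) (e₀ : E),
        (∀ i : Fin m, r (c i.castSucc) = s (c i.succ)) ∧
        r (c (Fin.last m)) = s (c 0) ∧
        (∀ i, RegularVx s (s (c i))) ∧
        e₀ ≠ c 0 ∧ s e₀ = s (c 0) ∧ r e₀ = v₀)) :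
    LeftAdhesive r s := by
  intro v₀
  rcases h with h1 | h2
  · obtain ⟨hregv, e₁, e₂, hne, hs1, hr1, hs2, hr2⟩ := h1 v₀
    refine key r s v₀ e₁ {e₂} ⟨e₂, Finset.mem_singleton_self e₂⟩
      (by simpa using hne) hr1 ⟨e₂, Finset.mem_singleton_self e₂, by rw [hr2, hs1]⟩ ?_ ?_
    · intro t ht
      rw [Finset.mem_singleton] at ht
      exact ⟨e₂, Finset.mem_singleton_self e₂, by rw [hr2, ht, hs2]⟩
    · intro u hu
      rw [Finset.mem_singleton] at hu
      subst hu
      rw [hr2]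
      exact (h1 v₀).1
  · obtain ⟨m, c, e₀, hchain, hclose, hcreg, hne, hs0, hr0⟩ := h2 v₀
    obtain ⟨m', c', hchain', hclose', hreg', hs', hnot⟩ :=
      trunc r s e₀ m c hchain hclose hcreg hne hs0
    refine key r s v₀ e₀ (Finset.univ.image c') ⟨c' 0, Finset.mem_image_of_mem c' (Finset.mem_univ 0)⟩
      ?_ hr0 ⟨c' (Fin.last m'), Finset.mem_image_of_mem c' (Finset.mem_univ _), by
        rw [hclose', hs', hs0]⟩ ?_ ?_
    · intro hmem
      obtain ⟨i, _, hi⟩ := Finset.mem_image.mp hmem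
      exact hnot i hi
    · intro t ht
      obtain ⟨i, _, hi⟩ := Finset.mem_image.mp ht
      subst hi
      induction i using Fin.cases with
      | zero =>
        exact ⟨c' (Fin.last m'), Finset.mem_image_of_mem c' (Finset.mem_univ _), hclose'⟩
      | succ j =>
        exact ⟨c' j.castSucc, Finset.mem_image_of_mem c' (Finset.mem_univ _), hchain' j⟩
    · intro u hu
      obtain ⟨i, _, hi⟩ := Finset.mem_image.mp hu
      subst hi
      induction i using Fin.lastCases with
      | last => rw [hclose']; exact hreg' 0
      | cast j => rw [hchain' j]; exact hreg' j.succ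
end

section
/- Let E = (E⁰, E¹, r, s) be a graph. If any of the following holds, then E is right adhesive: (r0) E has no regular vertices; (r1) every regular vertex of E is the base of at least two distinct loops; (r2) E⁰_reg is finite, and for each v₀ ∈ E⁰_reg there exist edges e₁, …, e_n ∈ E¹ forming a cycle, together with an edge e₀ ∈ E¹ with e₀ ≠ e₁, r(e₀) = r(e₁) and s(e₀) = v₀. -/
open scoped Classical

/-- If any of the following holds, then `E` is right adhesive:
(r0) `E` has no regular vertices;
(r1) every regular vertex of `E` supports at least two distinct loops;
(r2) `E⁰_reg` is finite, and for every regular vertex `v₀` there is a cycle `e₁, …, e_n`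
together with an edge `e₀ ≠ e₁` with `r(e₀) = r(e₁)` and `s(e₀) = v₀`. -/
theorem stmt17 {V E : Type} [Countable V] [Countable E] (r s : E → V)
    (h :
      (∀ v : V, ¬ RegularVx s v) ∨
      (∀ v : V, RegularVx s v →
        ∃ e₁ e₂ : E, e₁ ≠ e₂ ∧ s e₁ = v ∧ r e₁ = v ∧ s e₂ = v ∧ r e₂ = v) ∨
      ({v : V | RegularVx s v}.Finite ∧
        ∀ v₀ : V, RegularVx s v₀ → ∃ (m : ℕ) (c : Fin (m + 1) → E) (e₀ : E),
          (∀ i : Fin m, r (c i.castSucc) = s (c i.succ)) ∧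
          r (c (Fin.last m)) = s (c 0) ∧
          e₀ ≠ c 0 ∧ r e₀ = r (c 0) ∧ s e₀ = v₀)) :
    RightAdhesive r s := by

  classical
  rcases h with h0 | h1 | ⟨hfin, h2⟩
  · haveI : IsEmpty {v : V // RegularVx s v} := ⟨fun v => h0 v.1 v.2⟩
    exact ⟨fun _ => 0, fun v₀ => isEmptyElim v₀, fun v₀ => isEmptyElim v₀,
      fun v₀ => isEmptyElim v₀, fun v₀ => isEmptyElim v₀, fun _ => Set.toFinite _⟩
  · choose e₁ e₂ hne hs1 hr1 hs2 hr2 using h1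
    refine ⟨fun _ => 1, fun v₀ => ![e₁ v₀.1 v₀.2, e₂ v₀.1 v₀.2], ?_, ?_, ?_, ?_⟩
    · intro v₀ i j hij
      fin_cases i <;> fin_cases j <;> simp_all
      exact hne _ _ hij.symm
    · intro v₀; simpa using hs1 v₀.1 v₀.2
    · intro v₀ k
      refine ⟨1, ?_, ?_⟩
      · intro h; exact absurd (congrArg Fin.val h) (by simp)
      · fin_cases k <;> simp [hr1, hr2]
    · intro w
      have hsub : {v₀ : {v : V // RegularVx s v} |
          ∃ i, i ≠ 0 ∧ r (![e₁ v₀.1 v₀.2, e₂ v₀.1 v₀.2] i) = w} ⊆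
          {v₀ : {v : V // RegularVx s v} | v₀.1 = w} := by
        rintro v₀ ⟨i, hi, hri⟩
        fin_cases i
        · exact absurd rfl hi
        · show v₀.1 = w
          simpa [hr2 v₀.1 v₀.2] using hri
      refine Set.Finite.subset ?_ hsub
      apply Set.Subsingleton.finite
      intro a ha b hb
      exact Subtype.ext (ha.trans hb.symm)
  · choose m c e₀ hc hcl hne hr0 hs0 using h2
    haveI : Finite {v : V // RegularVx s v} := hfin.to_subtype
    refine ⟨fun _ => 1, fun v₀ => ![e₀ v₀.1 v₀.2, c v₀.1 v₀.2 0], ?_, ?_, ?_,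
      fun _ => Set.toFinite _⟩
    · intro v₀ i j hij
      fin_cases i <;> fin_cases j <;> simp_all
      exact hne _ _ hij.symm
    · intro v₀; simpa using hs0 v₀.1 v₀.2
    · intro v₀ k
      refine ⟨1, ?_, ?_⟩
      · intro h; exact absurd (congrArg Fin.val h) (by simp)
      · fin_cases k <;> simp [hr0 v₀.1 v₀.2]
end

section
/- Let E = (E⁰, E¹, r, s) be a graph and let H ⊆ E⁰ be a saturated hereditary subset with no breaking vertices. Define the subgraphs E₁ = (H, s⁻¹(H), r, s) and E₃ = (E⁰ ∖ H, E¹ ∖ r⁻¹(H), r, s). Then E⁰ is the disjoint union of E₁⁰ and E₃⁰, E⁰_reg is the disjoint union of (E₁)⁰_reg and (E₃)⁰_reg, and there exists a column-finite E₁⁰ × (E₃)⁰_reg integer matrix X with all entries nonnegative such that, under these decompositions, R_E equals the block matrix (R_{E₁} X; 0 R_{E₃}). -/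
open scoped Classical

/-- Regularity of a vertex in the subgraph `E₁ = (H, s⁻¹(H), r, s)`. -/
def Reg1 {V E : Type} (s : E → V) (H : Set V) (v : V) : Prop :=
  {e : E | s e ∈ H ∧ s e = v}.Nonempty ∧ {e : E | s e ∈ H ∧ s e = v}.Finite

/-- Regularity of a vertex in the subgraph `E₃ = (E⁰ ∖ H, E¹ ∖ r⁻¹(H), r, s)`. -/
def Reg3 {V E : Type} (r s : E → V) (H : Set V) (v : V) : Prop :=
  {e : E | r e ∉ H ∧ s e = v}.Nonempty ∧ {e : E | r e ∉ H ∧ s e = v}.Finite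

/-- Entry of the regular vertex matrix of the subgraph `E₁ = (H, s⁻¹(H), r, s)`. -/
noncomputable def ecount1 {V E : Type} (r s : E → V) (H : Set V) (w v : V) : ℕ :=
  Nat.card {e : E // s e ∈ H ∧ s e = w ∧ r e = v}

/-- Entry of the regular vertex matrix of the subgraph
`E₃ = (E⁰ ∖ H, E¹ ∖ r⁻¹(H), r, s)`. -/
noncomputable def ecount3 {V E : Type} (r s : E → V) (H : Set V) (w v : V) : ℕ :=
  Nat.card {e : E // r e ∉ H ∧ s e = w ∧ r e = v}

/-- Let `H ⊆ E⁰` be a saturated hereditary subset with no breaking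
vertices, and let `E₁ = (H, s⁻¹(H), r, s)`, `E₃ = (E⁰ ∖ H, E¹ ∖ r⁻¹(H), r, s)`.  Then `E⁰`
is the disjoint union of `E₁⁰ = H` and `E₃⁰ = Hᶜ`, `E⁰_reg` is the disjoint union of
`(E₁)⁰_reg` and `(E₃)⁰_reg`, and there is a column-finite `E₁⁰ × (E₃)⁰_reg` integer matrix
`X` with nonnegative entries such that, under these decompositions, `R_E` equals the block
matrix `(R_{E₁} X; 0 R_{E₃})`. -/
theorem stmt18 {V E : Type} [Countable V] [Countable E] (r s : E → V) (H : Set V)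
    (hher : ∀ e : E, s e ∈ H → r e ∈ H)
    (hsat : ∀ v : V, RegularVx s v → (∀ e : E, s e = v → r e ∈ H) → v ∈ H)
    (hnb : ∀ v : V, v ∉ H → (Reg3 r s H v ↔ RegularVx s v)) :
    (H ∪ Hᶜ = Set.univ ∧ H ∩ Hᶜ = ∅) ∧
    ({v : V | RegularVx s v} =
        {v : V | v ∈ H ∧ Reg1 s H v} ∪ {v : V | v ∉ H ∧ Reg3 r s H v} ∧
      {v : V | v ∈ H ∧ Reg1 s H v} ∩ {v : V | v ∉ H ∧ Reg3 r s H v} = ∅) ∧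
    (∃ X : {v : V // v ∈ H} → {w : V // w ∉ H ∧ Reg3 r s H w} → ℤ,
      (∀ v w, 0 ≤ X v w) ∧
      (∀ w, {v : {v : V // v ∈ H} | X v w ≠ 0}.Finite) ∧
      (∀ (v : {v : V // v ∈ H}) (w : {w : V // w ∉ H ∧ Reg3 r s H w}),
        X v w = (ecount r s w.1 v.1 : ℤ)) ∧
      (∀ v w : V, v ∈ H → w ∈ H → RegularVx s w →
        ecount r s w v = ecount1 r s H w v) ∧
      (∀ v w : V, v ∉ H → w ∈ H → RegularVx s w → ecount r s w v = 0) ∧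
      (∀ v w : V, v ∉ H → w ∉ H → Reg3 r s H w →
        ecount r s w v = ecount3 r s H w v)) := by

  refine ⟨⟨Set.union_compl_self H, Set.inter_compl_self H⟩, ⟨?_, ?_⟩, ?_⟩
  · ext v
    simp only [Set.mem_setOf_eq, Set.mem_union]
    constructor
    · intro hv
      by_cases hvH : v ∈ H
      · refine Or.inl ⟨hvH, ?_⟩
        have hset : {e : E | s e ∈ H ∧ s e = v} = {e : E | s e = v} := by
          ext e; constructor
          · exact fun h => h.2
          · exact fun h => ⟨h ▸ hvH, h⟩
        exact ⟨hset ▸ hv.1, hset ▸ hv.2⟩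
      · exact Or.inr ⟨hvH, (hnb v hvH).2 hv⟩
    · rintro (⟨hvH, h1, h2⟩ | ⟨hvH, h3⟩)
      · have hset : {e : E | s e ∈ H ∧ s e = v} = {e : E | s e = v} := by
          ext e; constructor
          · exact fun h => h.2
          · exact fun h => ⟨h ▸ hvH, h⟩
        exact ⟨hset ▸ h1, hset ▸ h2⟩
      · exact (hnb v hvH).1 h3
  · ext v
    simp only [Set.mem_inter_iff, Set.mem_setOf_eq, Set.mem_empty_iff_false, iff_false]
    rintro ⟨⟨h1, _⟩, ⟨h2, _⟩⟩
    exact h2 h1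
  · refine ⟨fun v w => (ecount r s w.1 v.1 : ℤ), fun v w => Int.ofNat_nonneg _, ?_,
      fun v w => rfl, ?_, ?_, ?_⟩
    · intro w
      have hfin : {e : E | s e = w.1}.Finite := ((hnb w.1 w.2.1).1 w.2.2).2
      have : {v : {v : V // v ∈ H} | (ecount r s w.1 v.1 : ℤ) ≠ 0} ⊆
          Subtype.val ⁻¹' (r '' {e : E | s e = w.1}) := by
        intro v hv
        have : ecount r s w.1 v.1 ≠ 0 := by
          simpa using hv
        have hne : Nonempty {e : E // s e = w.1 ∧ r e = v.1} :=
          Nat.card_ne_zero.mp this |>.1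
        obtain ⟨e, he1, he2⟩ := hne
        exact ⟨e, he1, he2⟩
      exact (Set.Finite.preimage Subtype.val_injective.injOn (hfin.image r)).subset this
    · intro v w hv hw _
      unfold ecount ecount1
      apply Nat.card_congr
      exact Equiv.subtypeEquivRight (fun e => by
        constructor
        · rintro ⟨h1, h2⟩; exact ⟨h1 ▸ hw, h1, h2⟩
        · rintro ⟨_, h1, h2⟩; exact ⟨h1, h2⟩)
    · intro v w hv hw _
      unfold ecount
      have : IsEmpty {e : E // s e = w ∧ r e = v} := by
        constructor
        rintro ⟨e, he1, he2⟩
        exact hv (he2 ▸ hher e (he1 ▸ hw))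
      exact Nat.card_of_isEmpty
    · intro v w hv hw _
      unfold ecount ecount3
      apply Nat.card_congr
      exact Equiv.subtypeEquivRight (fun e => by
        constructor
        · rintro ⟨h1, h2⟩; exact ⟨h2 ▸ hv, h1, h2⟩
        · rintro ⟨_, h1, h2⟩; exact ⟨h1, h2⟩)
end
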